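/- arXiv:2308.09235 — 10 statements merged into one kernel-verified Lean document; each statement's English description precedes it below -/
import Mathlib

section
/- Fix real numbers λ > 0, b, k, L > 0 and a nonzero real number a, and let σ ∈ ℂ satisfy (λ+1)²σ² ≠ 4λab. Then the following are equivalent: (i) there exist differentiable functions f, g : ℝ → ℂ, not both identically zero on [0,L], satisfying σ·f(x) + f'(x) + a·g(x) = 0 and σ·g(x) − λ·g'(x) + b·f(x) = 0 for all x ∈ [0,L], together with f(L) = g(L) and f(0) = k·g(0); (ii) F_{a,b,λ,k,L}(σ) = 0. -/
/-- The branch `η(σ)` of the square root of `((λ+1)²σ² − 4λab)/(4λ²)` given by the principal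
complex power; its square is always `((λ+1)²σ² − 4λab)/(4λ²)`. -/
noncomputable def charEta (lam a b : ℝ) (σ : ℂ) : ℂ :=
  ((((lam : ℂ) + 1) ^ 2 * σ ^ 2 - 4 * (lam : ℂ) * a * b) / (4 * (lam : ℂ) ^ 2)) ^ ((1 : ℂ) / 2)

open Classical in
/-- The characteristic function `F_{a,b,λ,k,L}(σ) = (k−1)cosh(ηL) −
((k+1)((λ+1)/(2λ))σ + (kb/λ + a))·sinh(ηL)/η`, with `sinh(ηL)/η` interpreted as `L` when
`η = 0`.  The value does not depend on the choice of the square root `η`. -/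
noncomputable def Fchar (lam a b k L : ℝ) (σ : ℂ) : ℂ :=
  ((k : ℂ) - 1) * Complex.cosh (charEta lam a b σ * L) -
    (((k : ℂ) + 1) * (((lam : ℂ) + 1) / (2 * (lam : ℂ))) * σ + ((k : ℂ) * b / lam + a)) *
      (if charEta lam a b σ = 0 then (L : ℂ)
       else Complex.sinh (charEta lam a b σ * L) / charEta lam a b σ)

/-!
Write the system as `(f, g)' = M (f, g)`. The eigenvalues of `M` are the roots `μ± = s ± η`,
`s = σ(1-λ)/(2λ)`, of `λμ² - σ(1-λ)μ + ab - σ²`; they are distinct because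
`(λ+1)²σ² ≠ 4λab`. Pairing a solution with the left eigenvectors `(σ - λμ±, aλ)` shows that
every solution on `[0, L]` is a superposition `C₊ e^{μ₊x} v₊ + C₋ e^{μ₋x} v₋` of the exponential
modes, with `v± = (-a, σ + μ±)`, and every such superposition is a solution. The boundary
conditions form a homogeneous `2 × 2` linear system for `(C₊, C₋)`, which has a nonzero solution
iff its determinant vanishes, and this determinant is `-2aη e^{sL} F(σ)`.
-/

open Complex Set
open scoped Matrix

def IsSolutionAt (lam a b σ : ℂ) (f g : ℝ → ℂ) (x : ℝ) : Prop :=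
  σ * f x + deriv f x + a * g x = 0 ∧ σ * g x - lam * deriv g x + b * f x = 0

/-- `e^{μx} (-a, σ + μ)` solves the system exactly when `IsCharRoot lam a b σ μ`. -/
def IsCharRoot (lam a b σ μ : ℂ) : Prop :=
  lam * μ ^ 2 - σ * (1 - lam) * μ + (a * b - σ ^ 2) = 0

theorem hasDerivAt_exp_mul_ofReal (μ : ℂ) (x : ℝ) :
    HasDerivAt (fun y : ℝ => exp (μ * y)) (μ * exp (μ * x)) x := by
  simpa [mul_comm] using (((hasDerivAt_id x).ofReal_comp).const_mul μ).cexp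

section Modes

variable {ι : Type*} [Fintype ι]

noncomputable def expSum (w μ : ι → ℂ) (x : ℝ) : ℂ := ∑ i, w i * exp (μ i * x)

theorem hasDerivAt_expSum (w μ : ι → ℂ) (x : ℝ) :
    HasDerivAt (expSum w μ) (expSum (μ * w) μ x) x :=
  HasDerivAt.fun_sum fun i _ => ((hasDerivAt_exp_mul_ofReal (μ i) x).const_mul (w i)).congr_deriv
    (by simp only [Pi.mul_apply]; ring)

/-- `(modeF a μ C, modeG σ μ C) = ∑ᵢ Cᵢ e^{μᵢ x} (-a, σ + μᵢ)`. -/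
noncomputable def modeF (a : ℂ) (μ C : ι → ℂ) : ℝ → ℂ := expSum (fun i => -a * C i) μ

noncomputable def modeG (σ : ℂ) (μ C : ι → ℂ) : ℝ → ℂ := expSum (fun i => (σ + μ i) * C i) μ

theorem differentiable_expSum (w μ : ι → ℂ) : Differentiable ℝ (expSum w μ) :=
  fun x => (hasDerivAt_expSum w μ x).differentiableAt

theorem isSolutionAt_mode {lam a b σ : ℂ} {μ : ι → ℂ} (hμ : ∀ i, IsCharRoot lam a b σ (μ i))
    (C : ι → ℂ) (x : ℝ) : IsSolutionAt lam a b σ (modeF a μ C) (modeG σ μ C) x := by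
  simp only [IsCharRoot] at hμ
  simp only [IsSolutionAt, modeF, modeG, (hasDerivAt_expSum _ _ x).deriv, expSum, Pi.mul_apply,
    Finset.mul_sum, ← Finset.sum_add_distrib, ← Finset.sum_sub_distrib]
  constructor <;> refine Finset.sum_eq_zero fun i _ => ?_
  · ring
  · linear_combination (-C i * exp (μ i * x)) * hμ i

end Modes

theorem eq_mul_exp_of_hasDerivAt {u : ℝ → ℂ} {μ : ℂ} {L : ℝ}
    (hu : ∀ x ∈ Icc 0 L, HasDerivAt u (μ * u x) x) :
    ∀ x ∈ Icc 0 L, u x = u 0 * exp (μ * x) := by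
  set φ : ℝ → ℂ := fun y => exp (-μ * y) * u y
  have hφ : ∀ x ∈ Icc 0 L, HasDerivAt φ 0 x := fun x hx =>
    ((hasDerivAt_exp_mul_ofReal (-μ) x).mul (hu x hx)).congr_deriv (by ring)
  have hcont : ContinuousOn φ (Icc 0 L) := fun x hx =>
    (hφ x hx).continuousAt.continuousWithinAt
  intro x hx
  have h := constant_of_has_deriv_right_zero hcont
    (fun y hy => (hφ y (Ico_subset_Icc_self hy)).hasDerivWithinAt) x hx
  simp only [φ, ofReal_zero, mul_zero, exp_zero, inv_one, one_mul, neg_mul, exp_neg] at h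
  rw [← h]
  field_simp

/-- `(σ - λμ, aλ)` is a left eigenvector of the system for the eigenvalue `μ`. -/
theorem hasDerivAt_leftMode {lam a b σ μ : ℂ} (hμ : IsCharRoot lam a b σ μ) {f g : ℝ → ℂ}
    {x : ℝ} (hf : DifferentiableAt ℝ f x) (hg : DifferentiableAt ℝ g x)
    (hx : IsSolutionAt lam a b σ f g x) :
    HasDerivAt (fun y => (σ - lam * μ) * f y + a * lam * g y)
      (μ * ((σ - lam * μ) * f x + a * lam * g x)) x :=
  ((hf.hasDerivAt.const_mul _).add (hg.hasDerivAt.const_mul _)).congr_deriv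
    (by unfold IsCharRoot at hμ; linear_combination (σ - lam * μ) * hx.1 - a * hx.2 + f x * hμ)

theorem eqOn_of_isSolutionAt {lam a b σ μ₁ μ₂ : ℂ} {L : ℝ} (hlam : lam ≠ 0) (ha : a ≠ 0)
    (hμ : μ₁ ≠ μ₂) (h₁ : IsCharRoot lam a b σ μ₁) (h₂ : IsCharRoot lam a b σ μ₂)
    {f g f' g' : ℝ → ℂ} (hf : Differentiable ℝ f) (hg : Differentiable ℝ g)
    (hf' : Differentiable ℝ f') (hg' : Differentiable ℝ g')
    (hs : ∀ x ∈ Icc 0 L, IsSolutionAt lam a b σ f g x)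
    (hs' : ∀ x ∈ Icc 0 L, IsSolutionAt lam a b σ f' g' x) (hf0 : f 0 = f' 0) (hg0 : g 0 = g' 0) :
    EqOn f f' (Icc 0 L) ∧ EqOn g g' (Icc 0 L) := by
  have key : ∀ μ, IsCharRoot lam a b σ μ → ∀ x ∈ Icc 0 L,
      (σ - lam * μ) * f x + a * lam * g x = (σ - lam * μ) * f' x + a * lam * g' x := by
    intro μ hμ x hx
    rw [eq_mul_exp_of_hasDerivAt (fun y hy => hasDerivAt_leftMode hμ (hf y) (hg y) (hs y hy)) x hx,
      eq_mul_exp_of_hasDerivAt (fun y hy => hasDerivAt_leftMode hμ (hf' y) (hg' y) (hs' y hy)) x hx,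
      hf0, hg0]
  have hfx : EqOn f f' (Icc 0 L) := fun x hx => by
    have h : lam * (μ₂ - μ₁) * (f x - f' x) = 0 := by
      linear_combination key μ₁ h₁ x hx - key μ₂ h₂ x hx
    simpa [hlam, sub_eq_zero, hμ.symm] using h
  refine ⟨hfx, fun x hx => ?_⟩
  have h : a * lam * (g x - g' x) = 0 := by
    linear_combination key μ₁ h₁ x hx - (σ - lam * μ₁) * hfx hx
  simpa [ha, hlam, sub_eq_zero] using h

theorem exists_mode_eq_at_zero {a σ : ℂ} {μ : Fin 2 → ℂ} (ha : a ≠ 0) (hμ : μ 0 ≠ μ 1)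
    (f₀ g₀ : ℂ) : ∃ C, modeF a μ C 0 = f₀ ∧ modeG σ μ C 0 = g₀ := by
  have hμ' : μ 0 - μ 1 ≠ 0 := sub_ne_zero.2 hμ
  refine ⟨![(a * g₀ + (σ + μ 1) * f₀) / (a * (μ 0 - μ 1)),
    -(a * g₀ + (σ + μ 0) * f₀) / (a * (μ 0 - μ 1))], ?_, ?_⟩ <;>
  · simp only [modeF, modeG, expSum, Fin.sum_univ_two, Matrix.cons_val_zero, Matrix.cons_val_one,
      Matrix.cons_val_fin_one, ofReal_zero, mul_zero, exp_zero, mul_one]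
    field_simp
    ring

theorem eq_zero_of_mode_eq_zero_at_zero {a σ : ℂ} {μ : Fin 2 → ℂ} (ha : a ≠ 0) (hμ : μ 0 ≠ μ 1)
    {C : Fin 2 → ℂ} (hF : modeF a μ C 0 = 0) (hG : modeG σ μ C 0 = 0) : C = 0 := by
  simp only [modeF, modeG, expSum, Fin.sum_univ_two, ofReal_zero, mul_zero, exp_zero,
    mul_one] at hF hG
  have hsum : C 0 + C 1 = 0 := by
    simpa [ha] using (show -a * (C 0 + C 1) = 0 by linear_combination hF)
  have hC0 : C 0 = 0 := by
    simpa [sub_eq_zero, hμ] using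
      (show (μ 0 - μ 1) * C 0 = 0 by linear_combination hG - (σ + μ 1) * hsum)
  ext i
  fin_cases i
  · exact hC0
  · simpa [hC0] using hsum

/-- Rows: the conditions `f(L) = g(L)` and `f(0) = k g(0)` on the mode coefficients. -/
noncomputable def boundaryMatrix (a σ k : ℂ) (μ : Fin 2 → ℂ) (L : ℝ) : Matrix (Fin 2) (Fin 2) ℂ :=
  !![(a + σ + μ 0) * exp (μ 0 * L), (a + σ + μ 1) * exp (μ 1 * L);
    a + k * (σ + μ 0), a + k * (σ + μ 1)]

theorem boundaryMatrix_mulVec_eq_zero_iff (a σ k : ℂ) (μ C : Fin 2 → ℂ) (L : ℝ) :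
    boundaryMatrix a σ k μ L *ᵥ C = 0 ↔
      modeF a μ C L = modeG σ μ C L ∧ modeF a μ C 0 = k * modeG σ μ C 0 := by
  simp only [funext_iff, Fin.forall_fin_two, boundaryMatrix, Matrix.mulVec, dotProduct,
    Fin.sum_univ_two, Matrix.of_apply, Matrix.cons_val', Matrix.cons_val_zero, Matrix.cons_val_one,
    Matrix.cons_val_fin_one, Pi.zero_apply, modeF, modeG, expSum, ofReal_zero, mul_zero, exp_zero,
    mul_one]
  constructor <;> rintro ⟨h₁, h₂⟩ <;> exact ⟨by linear_combination -h₁, by linear_combination -h₂⟩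

theorem exists_nontrivial_solution_iff_det_boundaryMatrix {lam a b k σ : ℂ} {μ : Fin 2 → ℂ}
    {L : ℝ} (hL : 0 ≤ L) (hlam : lam ≠ 0) (ha : a ≠ 0) (hμ : μ 0 ≠ μ 1)
    (hroot : ∀ i, IsCharRoot lam a b σ (μ i)) :
    (∃ f g : ℝ → ℂ, Differentiable ℝ f ∧ Differentiable ℝ g ∧
        ¬(∀ x ∈ Icc 0 L, f x = 0 ∧ g x = 0) ∧
        (∀ x ∈ Icc 0 L, IsSolutionAt lam a b σ f g x) ∧ f L = g L ∧ f 0 = k * g 0) ↔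
      (boundaryMatrix a σ k μ L).det = 0 := by
  have h0 : (0 : ℝ) ∈ Icc 0 L := ⟨le_rfl, hL⟩
  have hL' : L ∈ Icc 0 L := ⟨hL, le_rfl⟩
  rw [← Matrix.exists_mulVec_eq_zero_iff]
  constructor
  · rintro ⟨f, g, hf, hg, hnt, hs, hfgL, hfg0⟩
    obtain ⟨C, hCf, hCg⟩ := exists_mode_eq_at_zero (σ := σ) ha hμ (f 0) (g 0)
    obtain ⟨hfC, hgC⟩ := eqOn_of_isSolutionAt (f' := modeF a μ C) (g' := modeG σ μ C) hlam ha hμ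
      (hroot 0) (hroot 1) hf hg (differentiable_expSum _ _) (differentiable_expSum _ _) hs
      (fun x _ => isSolutionAt_mode hroot C x) hCf.symm hCg.symm
    refine ⟨C, ?_, ?_⟩
    · rintro rfl
      exact hnt fun x hx => by simpa [modeF, modeG, expSum] using And.intro (hfC hx) (hgC hx)
    · rw [boundaryMatrix_mulVec_eq_zero_iff, ← hfC hL', ← hgC hL', ← hfC h0, ← hgC h0]
      exact ⟨hfgL, hfg0⟩
  · rintro ⟨C, hC, hbd⟩
    rw [boundaryMatrix_mulVec_eq_zero_iff] at hbd
    exact ⟨modeF a μ C, modeG σ μ C, differentiable_expSum _ _, differentiable_expSum _ _,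
      fun h => hC (eq_zero_of_mode_eq_zero_at_zero ha hμ (h 0 h0).1 (h 0 h0).2),
      fun x _ => isSolutionAt_mode hroot C x, hbd⟩

theorem four_mul_sq_mul_charEta_sq {lam : ℝ} (hlam : (lam : ℂ) ≠ 0) (a b : ℝ) (σ : ℂ) :
    4 * (lam : ℂ) ^ 2 * charEta lam a b σ ^ 2 = ((lam : ℂ) + 1) ^ 2 * σ ^ 2 - 4 * lam * a * b := by
  rw [charEta, one_div, cpow_ofNat_inv_pow]
  field_simp

theorem charEta_ne_zero {lam a b : ℝ} (hlam : (lam : ℂ) ≠ 0) {σ : ℂ}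
    (hσ : ((lam : ℂ) + 1) ^ 2 * σ ^ 2 ≠ 4 * (lam : ℂ) * a * b) : charEta lam a b σ ≠ 0 := by
  intro h
  have h2 := four_mul_sq_mul_charEta_sq hlam a b σ
  rw [h] at h2
  exact hσ (by linear_combination -h2)

theorem isCharRoot_add {lam a b σ s η : ℂ} (hlam : lam ≠ 0) (hs : 2 * lam * s = σ * (1 - lam))
    (hη : 4 * lam ^ 2 * η ^ 2 = (lam + 1) ^ 2 * σ ^ 2 - 4 * lam * a * b) :
    IsCharRoot lam a b σ (s + η) := by
  have h : 4 * lam * (lam * (s + η) ^ 2 - σ * (1 - lam) * (s + η) + (a * b - σ ^ 2)) = 0 := by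
    linear_combination hη + (2 * lam * s + 4 * lam * η - σ * (1 - lam)) * hs
  exact (mul_eq_zero.1 h).resolve_left (by simp [hlam])

theorem det_boundaryMatrix_eq {lam a b k σ s η : ℂ} (L : ℝ) (hlam : lam ≠ 0) (hη : η ≠ 0)
    (hs : 2 * lam * s = σ * (1 - lam))
    (hη2 : 4 * lam ^ 2 * η ^ 2 = (lam + 1) ^ 2 * σ ^ 2 - 4 * lam * a * b) :
    (boundaryMatrix a σ k ![s + η, s - η] L).det = -2 * a * η * exp (s * L) *
      ((k - 1) * cosh (η * L) -
        ((k + 1) * ((lam + 1) / (2 * lam)) * σ + (k * b / lam + a)) * (sinh (η * L) / η)) := by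
  set G := (k + 1) * ((lam + 1) / (2 * lam)) * σ + (k * b / lam + a)
  have hG : (a + k * (σ + s)) * (a + σ + s) - k * η ^ 2 = a * G := by
    simp only [G]
    field_simp
    refine mul_left_cancel₀ (mul_ne_zero two_ne_zero hlam) ?_
    linear_combination (k * (2 * lam * (σ + s) + σ * (1 + lam)) + 2 * lam * a * (k + 1)) * hs
      - k * hη2
  simp only [boundaryMatrix, Matrix.det_fin_two_of, Matrix.cons_val_zero, Matrix.cons_val_one,
    Matrix.cons_val_fin_one, cosh, sinh, add_mul, sub_mul, exp_add, exp_sub, exp_neg]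
  field_simp
  linear_combination (exp (L * η) ^ 2 - 1) * hG

/-- For `λ > 0`, `L > 0`, `a ≠ 0` and `(λ+1)²σ² ≠ 4λab`, the eigenvalue problem
with boundary conditions `f(L) = g(L)`, `f(0) = k·g(0)` has a nontrivial solution on `[0,L]`
if and only if `F_{a,b,λ,k,L}(σ) = 0`. -/
theorem stmt_3 (lam b k L : ℝ) (hlam : 0 < lam) (hL : 0 < L) (a : ℝ) (ha : a ≠ 0)
    (σ : ℂ) (hσ : ((lam : ℂ) + 1) ^ 2 * σ ^ 2 ≠ 4 * (lam : ℂ) * a * b) :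
    (∃ f g : ℝ → ℂ, Differentiable ℝ f ∧ Differentiable ℝ g ∧
        ¬(∀ x ∈ Set.Icc (0 : ℝ) L, f x = 0 ∧ g x = 0) ∧
        (∀ x ∈ Set.Icc (0 : ℝ) L,
          σ * f x + deriv f x + (a : ℂ) * g x = 0 ∧
          σ * g x - (lam : ℂ) * deriv g x + (b : ℂ) * f x = 0) ∧
        f L = g L ∧ f 0 = (k : ℂ) * g 0) ↔
      Fchar lam a b k L σ = 0 := by
  have hlam' : (lam : ℂ) ≠ 0 := ofReal_ne_zero.2 hlam.ne'
  have hη := charEta_ne_zero hlam' hσ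
  have hη2 := four_mul_sq_mul_charEta_sq hlam' a b σ
  rw [Fchar, if_neg hη]
  set η := charEta lam a b σ
  set s : ℂ := σ * (1 - lam) / (2 * lam) with hs_def
  have hs : 2 * (lam : ℂ) * s = σ * (1 - lam) := by
    rw [hs_def]
    field_simp
  refine (exists_nontrivial_solution_iff_det_boundaryMatrix (μ := ![s + η, s - η]) hL.le hlam'
    (ofReal_ne_zero.2 ha) ?_ ?_).trans ?_
  · intro h
    simp only [Matrix.cons_val_zero, Matrix.cons_val_one] at h
    exact hη (by linear_combination h / 2)
  · rw [Fin.forall_fin_two]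
    exact ⟨isCharRoot_add hlam' hs hη2,
      by simpa [sub_eq_add_neg] using isCharRoot_add hlam' hs (η := -η) (by rwa [neg_sq])⟩
  · rw [det_boundaryMatrix_eq L hlam' hη hs hη2]
    simp [ha, hη, exp_ne_zero]
end

section
/- Let λ > 0 and L > 0 be real numbers and let k be real with |k| > 1. Define G(σ) := (k−1)·(1 + e^{−((λ+1)/λ)·σ·L}) − (k+1)·(1 − e^{−((λ+1)/λ)·σ·L}). For n ∈ ℤ set σ_n := (λ/((λ+1)·L))·(log|k| + 2n̂π·i), where n̂ = n if k > 1 and n̂ = n + 1/2 if k < −1. Then for every n ∈ ℤ, Re(σ_n) > 0 and G(σ_n) = 0. -/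
open Classical in
/-- For `λ, L > 0` and `|k| > 1`, every `σ_n = (λ/((λ+1)L))(log|k| + 2n̂πi)`
(with `n̂ = n` if `k > 1` and `n̂ = n + 1/2` if `k < −1`) lies in the open right half-plane and
is a zero of `G(σ) = (k−1)(1 + e^{−((λ+1)/λ)σL}) − (k+1)(1 − e^{−((λ+1)/λ)σL})`. -/
theorem stmt_5 (lam L k : ℝ) (hlam : 0 < lam) (hL : 0 < L) (hk : 1 < |k|) (n : ℤ)
    (nhat : ℂ) (hn : nhat = if 1 < k then (n : ℂ) else (n : ℂ) + 1 / 2)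
    (σn : ℂ)
    (hσ : σn = ((lam : ℂ) / (((lam : ℂ) + 1) * L)) *
      ((Real.log |k| : ℂ) + 2 * nhat * (Real.pi : ℂ) * Complex.I)) :
    0 < σn.re ∧
      ((k : ℂ) - 1) * (1 + Complex.exp (-(((lam : ℂ) + 1) / lam) * σn * L)) -
        ((k : ℂ) + 1) * (1 - Complex.exp (-(((lam : ℂ) + 1) / lam) * σn * L)) = 0 := by
  have hk0 : (0:ℝ) < |k| := lt_trans one_pos hk
  have hkne : k ≠ 0 := fun h => by simp [h] at hk0
  have hlamC : (lam:ℂ) ≠ 0 := by exact_mod_cast hlam.ne'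
  have hlam1C : (lam:ℂ) + 1 ≠ 0 := by
    have : (0:ℝ) < lam + 1 := by linarith
    exact_mod_cast this.ne'
  have hLC : (L:ℂ) ≠ 0 := by exact_mod_cast hL.ne'
  -- real value of nhat
  set m : ℝ := if 1 < k then (n:ℝ) else (n:ℝ) + 1/2 with hm
  have hnm : nhat = (m:ℂ) := by
    rw [hn, hm]; split_ifs <;> push_cast <;> ring
  -- the exponent simplifies
  have hexp : -(((lam : ℂ) + 1) / lam) * σn * L
      = -(Real.log |k| : ℂ) + (-(2 * (m:ℂ) * Real.pi)) * Complex.I := by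
    rw [hσ, hnm]; field_simp; ring
  -- value of the exponential
  have hE : Complex.exp (-(((lam : ℂ) + 1) / lam) * σn * L) = 1 / (k:ℂ) := by
    rw [hexp, Complex.exp_add]
    have h1 : Complex.exp (-(Real.log |k| : ℂ)) = ((|k|:ℝ)⁻¹ : ℂ) := by
      rw [← Complex.ofReal_neg, ← Complex.ofReal_exp, Real.exp_neg, Real.exp_log hk0]; push_cast; ring
    rw [h1]
    by_cases hk1 : 1 < k
    · have hmn : m = (n:ℝ) := by simp [hm, hk1]
      have : Complex.exp ((-(2 * (m:ℂ) * Real.pi)) * Complex.I)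
          = Complex.exp ((-n : ℤ) * (2 * Real.pi * Complex.I)) := by
        rw [hmn]; push_cast; ring_nf
      rw [this, Complex.exp_int_mul_two_pi_mul_I]
      have : |k| = k := abs_of_pos (lt_trans one_pos hk1)
      rw [this]
      field_simp
    · have hmn : m = (n:ℝ) + 1/2 := by simp [hm, hk1]
      have hkneg : k < 0 := by
        rcases abs_cases k with ⟨h, h2⟩ | ⟨h, h2⟩
        · exfalso; exact hk1 (h ▸ hk)
        · linarith
      have habs : |k| = -k := abs_of_neg hkneg
      have : Complex.exp ((-(2 * (m:ℂ) * Real.pi)) * Complex.I)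
          = Complex.exp ((-(n+1) : ℤ) * (2 * Real.pi * Complex.I)) *
              Complex.exp ((Real.pi : ℂ) * Complex.I) := by
        rw [hmn, ← Complex.exp_add]; push_cast; ring_nf
      rw [this, Complex.exp_int_mul_two_pi_mul_I, Complex.exp_pi_mul_I, habs]
      push_cast
      field_simp
  refine ⟨?_, ?_⟩
  · -- real part
    have hre : σn = ((lam / ((lam + 1) * L) * Real.log |k| : ℝ) : ℂ)
        + ((lam / ((lam + 1) * L) * (2 * m * Real.pi) : ℝ) : ℂ) * Complex.I := by
      rw [hσ, hnm]
      have h1 : ((lam : ℂ) / (((lam : ℂ) + 1) * L))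
          = ((lam / ((lam + 1) * L) : ℝ) : ℂ) := by push_cast; ring
      rw [h1]; push_cast; ring
    rw [hre]
    simp only [Complex.add_re, Complex.ofReal_re, Complex.mul_re, Complex.I_re,
      Complex.I_im, Complex.ofReal_im, mul_zero, zero_mul, mul_one, sub_zero]
    have hc : 0 < lam / ((lam + 1) * L) := by positivity
    have hlog : 0 < Real.log |k| := Real.log_pos hk
    nlinarith [mul_pos hc hlog]
  · rw [hE]
    have hkC : (k:ℂ) ≠ 0 := by exact_mod_cast hkne
    field_simp
    ring
end

section
/- Fix real numbers λ > 0, a, b and L > 0, and take k = 1. For every positive integer n with n²π²/L² ≥ ab/λ, the complex number σ_n := (2λ/(λ+1))·i·√(n²π²/L² − ab/λ) satisfies Re(σ_n) = 0 and F_{a,b,λ,1,L}(σ_n) = 0. In particular, F_{a,b,λ,1,L} has infinitely many purely imaginary zeros. -/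
lemma key (lam a b L : ℝ) (hlam : 0 < lam) (hL : 0 < L) (n : ℕ) (hn : 0 < n)
    (hab : a * b / lam ≤ (n : ℝ) ^ 2 * Real.pi ^ 2 / L ^ 2) :
    Fchar lam a b 1 L (((2 * lam / (lam + 1) : ℝ) : ℂ) * Complex.I *
          ((Real.sqrt ((n : ℝ) ^ 2 * Real.pi ^ 2 / L ^ 2 - a * b / lam) : ℝ) : ℂ)) = 0 := by
  set x : ℝ := Real.sqrt ((n : ℝ) ^ 2 * Real.pi ^ 2 / L ^ 2 - a * b / lam) with hxdef
  set σn : ℂ := ((2 * lam / (lam + 1) : ℝ) : ℂ) * Complex.I * (x : ℂ) with hσ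
  have hx2 : (x : ℝ) ^ 2 = (n : ℝ) ^ 2 * Real.pi ^ 2 / L ^ 2 - a * b / lam :=
    Real.sq_sqrt (by linarith)
  have hlam0 : (lam : ℂ) ≠ 0 := by exact_mod_cast hlam.ne'
  have hlam1 : (lam : ℂ) + 1 ≠ 0 := by
    have : ((lam + 1 : ℝ) : ℂ) ≠ 0 := by exact_mod_cast (by linarith : lam + 1 ≠ 0)
    simpa using this
  have hL0 : (L : ℂ) ≠ 0 := by exact_mod_cast hL.ne'
  -- the value under the square root
  have hz : (((lam : ℂ) + 1) ^ 2 * σn ^ 2 - 4 * (lam : ℂ) * a * b) / (4 * (lam : ℂ) ^ 2)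
      = -(((n : ℝ) * Real.pi / L : ℝ) : ℂ) ^ 2 := by
    have hx2' : ((x : ℂ)) ^ 2 = ((n : ℝ) : ℂ) ^ 2 * (Real.pi : ℂ) ^ 2 / (L : ℂ) ^ 2
        - (a : ℂ) * b / lam := by
      exact_mod_cast congrArg (fun r : ℝ => (r : ℂ)) hx2
    push_cast at hx2'
    set c : ℂ := ((2 * lam / (lam + 1) : ℝ) : ℂ) with hcdef
    have hc : c * ((lam : ℂ) + 1) = 2 * lam := by
      rw [hcdef]; push_cast; field_simp
    have hσ2 : σn ^ 2 = -(c ^ 2 * (x : ℂ) ^ 2) := by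
      rw [hσ]; ring_nf; rw [Complex.I_sq]; ring
    rw [hσ2, hx2']
    rw [div_eq_iff (by simp [hlam0] : (4 : ℂ) * (lam : ℂ) ^ 2 ≠ 0)]
    push_cast
    linear_combination (-((n:ℂ) ^ 2 * (Real.pi:ℂ) ^ 2 / (L:ℂ) ^ 2
      - (a:ℂ) * b / (lam:ℂ)) * (c * ((lam:ℂ)+1) + 2 * lam)) * hc
      + (4 * (lam:ℂ) * a * b) * (mul_inv_cancel₀ hlam0)
  set w : ℝ := (n : ℝ) * Real.pi with hwdef
  have hwpos : 0 < w := by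
    have : (0:ℝ) < (n:ℝ) := by exact_mod_cast hn
    exact mul_pos this Real.pi_pos
  have hwne : ((w / L : ℝ) : ℂ) ≠ 0 := by
    exact_mod_cast (div_pos hwpos hL).ne'
  have hzne : -(((w / L : ℝ) : ℂ)) ^ 2 ≠ 0 := by
    simpa using pow_ne_zero 2 hwne
  set η := charEta lam a b σn with hη
  have hηval : η = (-(((w / L : ℝ) : ℂ)) ^ 2) ^ ((1 : ℂ) / 2) := by
    rw [hη, charEta, hz]
  have hηne : η ≠ 0 := by
    rw [hηval, Ne, Complex.cpow_eq_zero_iff]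
    push_neg
    intro h; exact absurd h hzne
  have hηsq : η ^ 2 = -(((w / L : ℝ) : ℂ)) ^ 2 := by
    rw [hηval, sq, ← Complex.cpow_add _ _ hzne]
    norm_num
  have hηL : (η * L) ^ 2 = -((w : ℂ)) ^ 2 := by
    rw [mul_pow, hηsq]
    push_cast
    field_simp
  have hfac : (η * L - (w : ℂ) * Complex.I) * (η * L + (w : ℂ) * Complex.I) = 0 := by
    linear_combination hηL - (w : ℂ) ^ 2 * Complex.I_sq
  have hsinnw : Complex.sin ((w : ℝ) : ℂ) = 0 := by
    rw [← Complex.ofReal_sin, hwdef, Real.sin_nat_mul_pi]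
    simp
  have hsinh : Complex.sinh (η * L) = 0 := by
    rcases mul_eq_zero.1 hfac with h | h
    · rw [sub_eq_zero] at h
      rw [h, Complex.sinh_mul_I, hsinnw, zero_mul]
    · have h' : η * L = -((w : ℂ) * Complex.I) := by linear_combination h
      rw [h', Complex.sinh_neg, Complex.sinh_mul_I, hsinnw, zero_mul, neg_zero]
  rw [Fchar, ← hη, if_neg hηne, hsinh]
  norm_num


/-- For `k = 1`, each `σ_n = (2λ/(λ+1))·i·√(n²π²/L² − ab/λ)` (for positive
integers `n` with `n²π²/L² ≥ ab/λ`) is a purely imaginary zero of `F_{a,b,λ,1,L}`, and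
`F_{a,b,λ,1,L}` has infinitely many purely imaginary zeros. -/
theorem stmt_6 (lam a b L : ℝ) (hlam : 0 < lam) (hL : 0 < L) :
    (∀ n : ℕ, 0 < n → a * b / lam ≤ (n : ℝ) ^ 2 * Real.pi ^ 2 / L ^ 2 →
      ∀ σn : ℂ, σn = ((2 * lam / (lam + 1) : ℝ) : ℂ) * Complex.I *
          ((Real.sqrt ((n : ℝ) ^ 2 * Real.pi ^ 2 / L ^ 2 - a * b / lam) : ℝ) : ℂ) →
        σn.re = 0 ∧ Fchar lam a b 1 L σn = 0) ∧
    {σ : ℂ | σ.re = 0 ∧ Fchar lam a b 1 L σ = 0}.Infinite := by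
  have main : ∀ n : ℕ, 0 < n → a * b / lam ≤ (n : ℝ) ^ 2 * Real.pi ^ 2 / L ^ 2 →
      ∀ σn : ℂ, σn = ((2 * lam / (lam + 1) : ℝ) : ℂ) * Complex.I *
          ((Real.sqrt ((n : ℝ) ^ 2 * Real.pi ^ 2 / L ^ 2 - a * b / lam) : ℝ) : ℂ) →
        σn.re = 0 ∧ Fchar lam a b 1 L σn = 0 := by
    intro n hn hab σn hσn
    constructor
    · have h' : σn = Complex.I * ((2 * lam / (lam + 1) *
          Real.sqrt ((n : ℝ) ^ 2 * Real.pi ^ 2 / L ^ 2 - a * b / lam) : ℝ) : ℂ) := by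
        rw [hσn]; push_cast; ring
      rw [h']
      simp only [Complex.mul_re, Complex.I_re, Complex.I_im, Complex.ofReal_re,
        Complex.ofReal_im]
      ring
    · rw [hσn]; exact key lam a b L hlam hL n hn hab
  refine ⟨main, ?_⟩
  obtain ⟨N, hN⟩ := exists_nat_ge (a * b / lam * L ^ 2 / Real.pi ^ 2)
  have hπ2 : (0:ℝ) < Real.pi ^ 2 := by positivity
  have hL2 : (0:ℝ) < L ^ 2 := by positivity
  have habn : ∀ m : ℕ, a * b / lam ≤ ((m + N + 1 : ℕ) : ℝ) ^ 2 * Real.pi ^ 2 / L ^ 2 := by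
    intro m
    have h1 : (N : ℝ) ≤ ((m + N + 1 : ℕ) : ℝ) ^ 2 := by
      have : N ≤ (m + N + 1) ^ 2 := le_trans (by omega) (Nat.le_self_pow two_ne_zero _)
      exact_mod_cast this
    have h2 : a * b / lam * L ^ 2 / Real.pi ^ 2 ≤ ((m + N + 1 : ℕ) : ℝ) ^ 2 :=
      le_trans hN h1
    rw [div_le_iff₀ hπ2] at h2
    rw [le_div_iff₀ hL2]
    nlinarith
  set f : ℕ → ℂ := fun m => ((2 * lam / (lam + 1) : ℝ) : ℂ) * Complex.I *
      ((Real.sqrt (((m + N + 1 : ℕ) : ℝ) ^ 2 * Real.pi ^ 2 / L ^ 2 - a * b / lam) : ℝ) : ℂ)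
    with hf
  refine Set.infinite_of_injective_forall_mem (f := f) ?_ ?_
  · intro m1 m2 hm
    have hc : (2 * lam / (lam + 1)) ≠ 0 := by positivity
    have him : (f m1).im = (f m2).im := congrArg Complex.im hm
    simp only [hf, Complex.mul_im, Complex.mul_re, Complex.ofReal_re, Complex.ofReal_im,
      Complex.I_re, Complex.I_im] at him
    have hsq : Real.sqrt (((m1 + N + 1 : ℕ) : ℝ) ^ 2 * Real.pi ^ 2 / L ^ 2 - a * b / lam)
        = Real.sqrt (((m2 + N + 1 : ℕ) : ℝ) ^ 2 * Real.pi ^ 2 / L ^ 2 - a * b / lam) := by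
      apply mul_left_cancel₀ hc
      linarith [him]
    rw [Real.sqrt_inj (by linarith [habn m1]) (by linarith [habn m2])] at hsq
    have h2 : (((m1 + N + 1 : ℕ) : ℝ)) ^ 2 = (((m2 + N + 1 : ℕ) : ℝ)) ^ 2 := by
      have hne : Real.pi ^ 2 / L ^ 2 ≠ 0 := by positivity
      apply mul_right_cancel₀ hne
      have e1 : ∀ A : ℝ, A ^ 2 * Real.pi ^ 2 / L ^ 2 = A ^ 2 * (Real.pi ^ 2 / L ^ 2) := by
        intro A; ring
      rw [← e1, ← e1]
      linarith [hsq]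
    have h3 : ((m1 + N + 1 : ℕ) : ℝ) = ((m2 + N + 1 : ℕ) : ℝ) := by
      have h1 : (0:ℝ) ≤ ((m1 + N + 1 : ℕ) : ℝ) := Nat.cast_nonneg _
      have h1' : (0:ℝ) ≤ ((m2 + N + 1 : ℕ) : ℝ) := Nat.cast_nonneg _
      nlinarith
    have h4 : m1 + N + 1 = m2 + N + 1 := by exact_mod_cast h3
    omega
  · intro m
    exact main (m + N + 1) (by omega) (habn m) (f m) rfl
end

section
/- Fix real numbers λ > 0, a, b and L > 0, and take k = −1. Then the set {β ∈ ℝ : F_{a,b,λ,−1,L}(i·β) = 0} is infinite. -/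
/-- Principal square root of a negative real:  `(-(t²))^(1/2) = t·I` for `t > 0`. -/
lemma cpow_half_neg_sq {t : ℝ} (ht : 0 < t) :
    ((-(t ^ 2) : ℝ) : ℂ) ^ ((1 : ℂ) / 2) = (t : ℂ) * Complex.I := by
  rw [Complex.ofReal_cpow_of_nonpos (by nlinarith : -(t ^ 2) ≤ 0)]
  have h1 : ((-(-(t ^ 2)) : ℝ) : ℂ) ^ ((1 : ℂ) / 2) = (t : ℂ) := by
    rw [neg_neg]
    have : ((t ^ 2 : ℝ) : ℂ) ^ ((1 : ℂ) / 2)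
        = (((t ^ 2 : ℝ) ^ ((1 : ℝ) / 2) : ℝ) : ℂ) := by
      rw [Complex.ofReal_cpow (by positivity)]
      norm_num
    rw [this, ← Real.rpow_natCast t 2, ← Real.rpow_mul ht.le]
    norm_num
  have h2 : Complex.exp (↑Real.pi * Complex.I * ((1 : ℂ) / 2)) = Complex.I := by
    have : (↑Real.pi * Complex.I * ((1 : ℂ) / 2)) = ((Real.pi / 2 : ℝ) : ℂ) * Complex.I := by
      push_cast; ring
    rw [this, Complex.exp_mul_I]
    simp [← Complex.ofReal_cos, ← Complex.ofReal_sin]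
  push_cast at h1 ⊢
  rw [h1, h2]

/-- For any `c` and `L > 0` there are arbitrarily large roots of
`2t·cos(tL) + c·sin(tL) = 0`. -/
lemma exists_large_root (c L T : ℝ) (hL : 0 < L) (hT : 1 ≤ T) :
    ∃ t : ℝ, T ≤ t ∧ 2 * t * Real.cos (t * L) + c * Real.sin (t * L) = 0 := by
  have hpi := Real.pi_pos
  obtain ⟨n, hn⟩ := exists_nat_ge (T * L / (2 * Real.pi))
  set h : ℝ → ℝ := fun t => 2 * t * Real.cos (t * L) + c * Real.sin (t * L) with hh
  set x₀ : ℝ := n * (2 * Real.pi) / L with hx₀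
  set x₁ : ℝ := (n * (2 * Real.pi) + Real.pi) / L with hx₁
  have hx₀T : T ≤ x₀ := by
    rw [hx₀, le_div_iff₀ hL]
    rw [div_le_iff₀ (by positivity)] at hn
    linarith
  have hx₀pos : 0 < x₀ := lt_of_lt_of_le (by linarith) hx₀T
  have hx01 : x₀ ≤ x₁ := by
    rw [hx₀, hx₁]; gcongr; linarith
  have hcos0 : Real.cos (x₀ * L) = 1 := by
    rw [hx₀, div_mul_cancel₀ _ hL.ne', Real.cos_nat_mul_two_pi]
  have hsin0 : Real.sin (x₀ * L) = 0 := by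
    rw [hx₀, div_mul_cancel₀ _ hL.ne']
    have : (n : ℝ) * (2 * Real.pi) = (2 * n : ℕ) * Real.pi := by push_cast; ring
    rw [this, Real.sin_nat_mul_pi]
  have hcos1 : Real.cos (x₁ * L) = -1 := by
    rw [hx₁, div_mul_cancel₀ _ hL.ne', Real.cos_nat_mul_two_pi_add_pi]
  have hsin1 : Real.sin (x₁ * L) = 0 := by
    rw [hx₁, div_mul_cancel₀ _ hL.ne']
    have : (n : ℝ) * (2 * Real.pi) + Real.pi = (2 * n + 1 : ℕ) * Real.pi := by push_cast; ring
    rw [this, Real.sin_nat_mul_pi]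
  have hh0 : 0 < h x₀ := by simp only [hh, hcos0, hsin0]; nlinarith
  have hh1 : h x₁ < 0 := by
    have hx₁pos : 0 < x₁ := lt_of_lt_of_le hx₀pos hx01
    simp only [hh, hcos1, hsin1]; nlinarith
  have hcont : ContinuousOn h (Set.Icc x₀ x₁) := by
    apply Continuous.continuousOn; fun_prop
  obtain ⟨t, htmem, htzero⟩ := intermediate_value_Icc' hx01 hcont ⟨hh1.le, hh0.le⟩
  exact ⟨t, le_trans hx₀T htmem.1, htzero⟩


/-- If `t > 0` solves `2t·cos(tL) + (a − b/λ)·sin(tL) = 0` and `β` satisfies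
`(λ+1)²β² = 4λ²t² − 4λab`, then `iβ` is a zero of the characteristic function for `k = −1`. -/
lemma Fchar_neg_one_zero (lam a b L t β : ℝ) (hlam : 0 < lam) (ht0 : 0 < t)
    (hβsq : (lam + 1) ^ 2 * β ^ 2 = 4 * lam ^ 2 * t ^ 2 - 4 * lam * a * b)
    (htzero : 2 * t * Real.cos (t * L) + (a - b / lam) * Real.sin (t * L) = 0) :
    Fchar lam a b (-1) L (Complex.I * (β : ℂ)) = 0 := by
  have hCsq : ((lam : ℂ) + 1) ^ 2 * ((β : ℂ)) ^ 2
      = 4 * (lam : ℂ) ^ 2 * (t : ℂ) ^ 2 - 4 * (lam : ℂ) * (a : ℂ) * (b : ℂ) := by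
    exact_mod_cast congrArg (fun x : ℝ => (x : ℂ)) hβsq
  have hlamC : (4 : ℂ) * (lam : ℂ) ^ 2 ≠ 0 :=
    mul_ne_zero (by norm_num) (pow_ne_zero 2 (Complex.ofReal_ne_zero.mpr hlam.ne'))
  have harg : ((((lam : ℂ) + 1) ^ 2 * (Complex.I * (β : ℂ)) ^ 2 - 4 * (lam : ℂ) * a * b) /
      (4 * (lam : ℂ) ^ 2)) = ((-(t ^ 2) : ℝ) : ℂ) := by
    rw [div_eq_iff hlamC]
    push_cast
    linear_combination (-1 : ℂ) * hCsq + ((lam : ℂ) + 1) ^ 2 * (β : ℂ) ^ 2 * Complex.I_sq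
  have hEta : charEta lam a b (Complex.I * (β : ℂ)) = (t : ℂ) * Complex.I := by
    rw [charEta, harg, cpow_half_neg_sq ht0]
  have hEtaNe : charEta lam a b (Complex.I * (β : ℂ)) ≠ 0 := by
    rw [hEta]
    simp [Complex.I_ne_zero, ht0.ne']
  rw [Fchar, if_neg hEtaNe, hEta]
  have hmulL : (t : ℂ) * Complex.I * (L : ℂ) = ((t * L : ℝ) : ℂ) * Complex.I := by
    push_cast; ring
  rw [hmulL, Complex.cosh_mul_I, Complex.sinh_mul_I]
  rw [show Complex.cos ((t * L : ℝ) : ℂ) = ((Real.cos (t * L) : ℝ) : ℂ) from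
    (Complex.ofReal_cos _).symm]
  rw [show Complex.sin ((t * L : ℝ) : ℂ) = ((Real.sin (t * L) : ℝ) : ℂ) from
    (Complex.ofReal_sin _).symm]
  have hI : ((Real.sin (t * L) : ℝ) : ℂ) * Complex.I / ((t : ℂ) * Complex.I)
      = ((Real.sin (t * L) / t : ℝ) : ℂ) := by
    rw [mul_div_mul_right _ _ Complex.I_ne_zero]
    push_cast; ring
  rw [hI]
  have hreal : (-2 : ℝ) * Real.cos (t * L)
      - ((-1) * b / lam + a) * (Real.sin (t * L) / t) = 0 := by
    field_simp at htzero ⊢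
    nlinarith [htzero]
  have hC : (((-2 : ℝ) * Real.cos (t * L)
      - ((-1) * b / lam + a) * (Real.sin (t * L) / t) : ℝ) : ℂ) = 0 := by
    rw [hreal]; simp
  push_cast at hC ⊢
  linear_combination hC

/-- For `k = −1`, the set of real `β` with `F_{a,b,λ,−1,L}(iβ) = 0` is
infinite. -/
theorem stmt_7 (lam a b L : ℝ) (hlam : 0 < lam) (hL : 0 < L) :
    {β : ℝ | Fchar lam a b (-1) L (Complex.I * (β : ℂ)) = 0}.Infinite := by
  apply Set.infinite_of_not_bddAbove
  rintro ⟨M, hM⟩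
  set Q : ℝ := (M ^ 2 * (lam + 1) ^ 2 + 4 * lam * a * b) / (4 * lam ^ 2) with hQ
  set m : ℝ := max Q (a * b / lam) with hm
  set T : ℝ := Real.sqrt m + 1 with hT
  have hsq := Real.sqrt_nonneg m
  have hT1 : (1 : ℝ) ≤ T := by rw [hT]; linarith
  have hmT : m < T ^ 2 := by
    rcases le_or_gt 0 m with h0 | h0
    · nlinarith [Real.sq_sqrt h0]
    · nlinarith
  obtain ⟨t, htT, htzero⟩ := exists_large_root (a - b / lam) L T hL hT1
  have ht0 : 0 < t := lt_of_lt_of_le (by linarith) htT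
  have htm : m < t ^ 2 := lt_of_lt_of_le hmT (by nlinarith)
  have htQ : Q < t ^ 2 := lt_of_le_of_lt (le_max_left _ _) htm
  have htab : a * b / lam < t ^ 2 := lt_of_le_of_lt (le_max_right _ _) htm
  have hkey : 0 < 4 * lam ^ 2 * t ^ 2 - 4 * lam * a * b := by
    rw [div_lt_iff₀ hlam] at htab; nlinarith
  set β : ℝ := Real.sqrt ((4 * lam ^ 2 * t ^ 2 - 4 * lam * a * b) / (lam + 1) ^ 2) with hβ
  have hlam1 : (0 : ℝ) < (lam + 1) ^ 2 := by positivity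
  have hβsq : (lam + 1) ^ 2 * β ^ 2 = 4 * lam ^ 2 * t ^ 2 - 4 * lam * a * b := by
    rw [hβ, Real.sq_sqrt (by positivity)]; field_simp
  have hβmem : β ∈ {β : ℝ | Fchar lam a b (-1) L (Complex.I * (β : ℂ)) = 0} :=
    Fchar_neg_one_zero lam a b L t β hlam ht0 hβsq htzero
  have hβM : M < β := by
    have hMsq : M ^ 2 < (4 * lam ^ 2 * t ^ 2 - 4 * lam * a * b) / (lam + 1) ^ 2 := by
      rw [lt_div_iff₀ hlam1, hQ] at *
      rw [div_lt_iff₀ (by positivity : (0:ℝ) < 4 * lam ^ 2)] at htQ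
      nlinarith
    rcases le_or_gt 0 M with h0M | h0M
    · rw [hβ]; exact (Real.lt_sqrt h0M).mpr hMsq
    · exact lt_of_lt_of_le h0M (Real.sqrt_nonneg _)
  exact absurd (hM hβmem) (not_le.mpr hβM)
end

section
/- Fix real numbers λ > 0, a, b and δ ∈ (0,1). Then there exists R > 0 such that for every real k with |k| ≤ 1 − δ, every L > 0, and every σ ∈ ℂ with Re(σ) ≥ 0 and F_{a,b,λ,k,L}(σ) = 0, one has |σ| ≤ R. -/
/-!
Write `μ = (λ+1)σ/(2λ)`, `c = ab/λ` and `B = kb/λ + a`. Then `η² = μ² - c`, so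
`(η - μ)(η + μ) = -c` and `η` lies within `√|c|` of `μ` or of `-μ`. A zero of `F` means
`tanh (ηL) = (k - 1)η / ((k + 1)μ + B)`, which for large `|μ|` is close to the real number
`±(k - 1)/(k + 1)`, of modulus at least `δ/2`. The principal root has `Re η ≥ 0`, hence
`Re tanh (ηL) ≥ 0`, which excludes the sign `+`. For the sign `-`, `η ≈ -μ` with both in the closed
right half-plane forces `Re η = 0`, so `tanh (ηL)` is purely imaginary, which excludes it too.
-/

open Complex ComplexConjugate

namespace Complex

theorem re_sinh_mul_conj_cosh (z : ℂ) :
    (sinh z * conj (cosh z)).re = Real.sinh (2 * z.re) / 2 := by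
  have h : sinh z * conj (cosh z) = (sinh (z + conj z) + sinh (z - conj z)) / 2 := by
    rw [← cosh_conj, sinh_add, sinh_sub]; ring
  rw [h, add_conj, sub_conj, sinh_mul_I, ← ofReal_sinh, ← ofReal_sin, div_ofNat_re, add_re,
    ofReal_re, mul_I_re, ofReal_im, neg_zero, add_zero]

theorem re_eq_of_mul_cosh_eq_sinh {T z : ℂ} (h : T * cosh z = sinh z) :
    T.re = Real.sinh (2 * z.re) / 2 / normSq (cosh z) := by
  have hcosh : cosh z ≠ 0 := by
    intro h0
    have := cosh_sq_sub_sinh_sq z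
    rw [← h, h0] at this
    simp at this
  rw [eq_div_iff (normSq_pos.2 hcosh).ne', ← re_sinh_mul_conj_cosh, ← h, mul_assoc, mul_conj,
    re_mul_ofReal]

theorem norm_sub_le_or_norm_add_le_of_sq_eq {η μ : ℂ} {c : ℝ} (h : η ^ 2 = μ ^ 2 - c) :
    ‖η - μ‖ ≤ √|c| ∨ ‖η + μ‖ ≤ √|c| := by
  have hprod : ‖η - μ‖ * ‖η + μ‖ = |c| := by
    rw [← norm_mul, show (η - μ) * (η + μ) = -c by linear_combination h, norm_neg, norm_real,
      Real.norm_eq_abs]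
  by_contra! hlt
  have := mul_lt_mul'' hlt.1 hlt.2 (Real.sqrt_nonneg _) (Real.sqrt_nonneg _)
  rw [Real.mul_self_sqrt (abs_nonneg c), hprod] at this
  exact this.false

/-- Comparing imaginary parts of `η² = μ² - c` gives `Re η · Im η = Re μ · Im μ`, while
`η ≈ -μ` with `|Im μ|` large makes `Im η` and `Im μ` of opposite signs. -/
theorem re_eq_zero_of_norm_add_le {η μ : ℂ} {c r : ℝ} (h : η ^ 2 = μ ^ 2 - c)
    (hη : 0 ≤ η.re) (hμ : 0 ≤ μ.re) (hsum : ‖η + μ‖ ≤ r) (hr : 2 * r < ‖μ‖) : η.re = 0 := by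
  have him : η.re * η.im = μ.re * μ.im := by
    have := congrArg im h
    simp only [sq, mul_im, sub_im, ofReal_im] at this
    linarith
  have hre_sum : η.re + μ.re ≤ r := (le_abs_self _).trans ((abs_re_le_norm (η + μ)).trans hsum)
  have him_sum : |η.im + μ.im| ≤ r := (abs_im_le_norm (η + μ)).trans hsum
  have hμim : r < |μ.im| := by
    have := norm_le_abs_re_add_abs_im μ
    rw [abs_of_nonneg hμ] at this
    linarith
  have hopp : η.im * μ.im < 0 := by
    have : (η.im + μ.im) * μ.im ≤ r * |μ.im| :=
      (le_abs_self _).trans (by rw [abs_mul]; gcongr)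
    nlinarith [abs_mul_abs_self μ.im, abs_nonneg μ.im]
  have : η.re * (η.im * μ.im) = μ.re * μ.im ^ 2 := by rw [← mul_assoc, him]; ring
  nlinarith [mul_nonneg hμ (sq_nonneg μ.im)]

end Complex

theorem norm_mul_div_sub_le {k : ℝ} (hk : -1 < k) {s μ η B : ℂ} (hs : ‖s‖ = 1)
    (hW : (k + 1) * μ + B ≠ 0) :
    ‖(k - 1) * η / ((k + 1) * μ + B) - s * ((k - 1) / (k + 1))‖ ≤
      |k - 1| * ((k + 1) * ‖η - s * μ‖ + ‖B‖) / ((k + 1) * ‖(k + 1) * μ + B‖) := by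
  have hk1 : (k : ℂ) + 1 ≠ 0 := by exact_mod_cast (neg_lt_iff_pos_add.1 hk).ne'
  have hnorm : ‖(k : ℂ) + 1‖ = k + 1 := by
    exact_mod_cast (Real.norm_of_nonneg (neg_lt_iff_pos_add.1 hk).le)
  have hid : (k - 1) * η / ((k + 1) * μ + B) - s * ((k - 1) / (k + 1)) =
      (k - 1) * ((k + 1) * (η - s * μ) - s * B) / ((k + 1) * ((k + 1) * μ + B)) := by
    field_simp
    ring
  rw [hid, norm_div, norm_mul, norm_mul, hnorm, show ‖(k : ℂ) - 1‖ = |k - 1| by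
    exact_mod_cast Real.norm_eq_abs (k - 1)]
  gcongr |k - 1| * ?_ / _
  · exact mul_nonneg (by linarith) (norm_nonneg _)
  refine (norm_sub_le ((k + 1 : ℂ) * (η - s * μ)) (s * B)).trans ?_
  rw [norm_mul, norm_mul, hs, hnorm, one_mul]

theorem sub_le_norm_mul_add {δ k B₀ : ℝ} (hδ : 0 ≤ δ) (hk : δ ≤ k + 1) {μ B : ℂ}
    (hB : ‖B‖ ≤ B₀) : δ * ‖μ‖ - B₀ ≤ ‖(k + 1) * μ + B‖ := by
  have := norm_sub_le_norm_add ((k + 1 : ℂ) * μ) B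
  rw [norm_mul, show ‖(k : ℂ) + 1‖ = k + 1 by
    exact_mod_cast Real.norm_of_nonneg (hδ.trans hk)] at this
  nlinarith [norm_nonneg μ]

theorem norm_mul_div_sub_lt {δ k r B₀ : ℝ} (hδ : 0 < δ) (hk : |k| ≤ 1 - δ) {s μ η B : ℂ}
    (hs : ‖s‖ = 1) (hsμ : ‖η - s * μ‖ ≤ r) (hB : ‖B‖ ≤ B₀)
    (hgap : 4 * (2 * r + B₀) < δ ^ 2 * (δ * ‖μ‖ - B₀)) :
    ‖(k - 1) * η / ((k + 1) * μ + B) - s * ((k - 1) / (k + 1) : ℝ)‖ < δ / 2 := by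
  obtain ⟨hk₁, hk₂⟩ := abs_le.1 hk
  have hB₀ : 0 ≤ B₀ := (norm_nonneg B).trans hB
  have hr : 0 ≤ r := (norm_nonneg _).trans hsμ
  have hW := sub_le_norm_mul_add hδ.le (by linarith) (μ := μ) hB
  have hWpos : 0 < δ * ‖μ‖ - B₀ :=
    pos_of_mul_pos_right ((by positivity : (0 : ℝ) ≤ _).trans_lt hgap) (sq_nonneg δ)
  have hW₀ : (k + 1) * μ + B ≠ 0 := norm_pos_iff.1 (hWpos.trans_le hW)
  push_cast
  refine (norm_mul_div_sub_le (η := η) (by linarith) hs hW₀).trans_lt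
    ((div_lt_iff₀ (mul_pos (by linarith) (norm_pos_iff.2 hW₀))).2 ?_)
  calc |k - 1| * ((k + 1) * ‖η - s * μ‖ + ‖B‖) ≤ 2 * (2 * r + B₀) :=
        mul_le_mul (abs_le.2 ⟨by linarith, by linarith⟩)
          (add_le_add (mul_le_mul (by linarith) hsμ (norm_nonneg _) zero_le_two) hB)
          (add_nonneg (mul_nonneg (by linarith) (norm_nonneg _)) (norm_nonneg _)) zero_le_two
    _ < δ / 2 * (δ * (δ * ‖μ‖ - B₀)) := by linarith
    _ ≤ δ / 2 * ((k + 1) * ‖(k + 1) * μ + B‖) := by gcongr <;> linarith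

theorem four_mul_add_lt_sq_mul_sub {δ r B₀ m : ℝ} (hδ : 0 < δ) (hr : 0 ≤ r)
    (h : 2 * r + B₀ / δ + 4 * (2 * r + B₀) / δ ^ 3 < m) :
    4 * (2 * r + B₀) < δ ^ 2 * (δ * m - B₀) := by
  have hid : δ ^ 2 * (δ * m - B₀) - 4 * (2 * r + B₀) =
      δ ^ 3 * (m - (2 * r + B₀ / δ + 4 * (2 * r + B₀) / δ ^ 3)) + 2 * r * δ ^ 3 := by
    field_simp
    ring
  nlinarith [mul_pos (pow_pos hδ 3) (sub_pos.2 h)]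

theorem norm_le_of_mul_cosh_eq_mul_sinh {δ k c B₀ L : ℝ} (hδ : 0 < δ) (hk : |k| ≤ 1 - δ)
    (hL : 0 < L) {μ η B : ℂ} (hη : η ^ 2 = μ ^ 2 - c) (hηre : 0 ≤ η.re) (hμre : 0 ≤ μ.re)
    (hB : ‖B‖ ≤ B₀) (h : (k - 1) * η * cosh (η * L) = ((k + 1) * μ + B) * sinh (η * L)) :
    ‖μ‖ ≤ 2 * √|c| + B₀ / δ + 4 * (2 * √|c| + B₀) / δ ^ 3 := by
  set r := √|c|
  set T := (k - 1) * η / ((k + 1) * μ + B)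
  set t : ℝ := (k - 1) / (k + 1)
  obtain ⟨hk₁, hk₂⟩ := abs_le.1 hk
  have hB₀ : 0 ≤ B₀ := (norm_nonneg B).trans hB
  by_contra! hμ
  have hrμ : 2 * r < ‖μ‖ := by
    have : 0 ≤ B₀ / δ + 4 * (2 * r + B₀) / δ ^ 3 := by positivity
    linarith
  have hgap := four_mul_add_lt_sq_mul_sub hδ (Real.sqrt_nonneg |c|) hμ
  have hW₀ : (k + 1) * μ + B ≠ 0 := norm_pos_iff.1 <|
    (pos_of_mul_pos_right ((by positivity : (0 : ℝ) ≤ _).trans_lt hgap) (sq_nonneg δ)).trans_le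
      (sub_le_norm_mul_add hδ.le (by linarith) hB)
  have hT : T * cosh (η * L) = sinh (η * L) := by
    rw [div_mul_eq_mul_div, div_eq_iff hW₀, h, mul_comm]
  have ht : δ / 2 ≤ -t := by
    rw [le_neg, div_le_iff₀ (by linarith)]
    nlinarith
  have hre := re_eq_of_mul_cosh_eq_sinh hT
  rw [re_mul_ofReal] at hre
  rcases norm_sub_le_or_norm_add_le_of_sq_eq hη with hsub | hadd
  · have hTre : 0 ≤ T.re := by
      rw [hre]
      exact div_nonneg (div_nonneg (Real.sinh_nonneg_iff.2
        (mul_nonneg zero_le_two (mul_nonneg hηre hL.le))) zero_le_two) (normSq_nonneg _)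
    have := (abs_re_le_norm _).trans_lt
      (norm_mul_div_sub_lt (s := 1) hδ hk norm_one (by rwa [one_mul]) hB hgap)
    rw [one_mul, sub_re, ofReal_re, abs_lt] at this
    linarith
  · have hTre : T.re = 0 := by
      rw [hre, re_eq_zero_of_norm_add_le hη hηre hμre hadd hrμ]; simp
    have := (abs_re_le_norm _).trans_lt <| norm_mul_div_sub_lt (s := -1) hδ hk (by simp)
      (by rwa [neg_one_mul, sub_neg_eq_add]) hB hgap
    rw [neg_one_mul, sub_neg_eq_add, add_re, ofReal_re, hTre, zero_add, abs_lt] at this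
    linarith

theorem charEta_sq (lam a b : ℝ) (σ : ℂ) :
    charEta lam a b σ ^ 2 = (((lam + 1) / (2 * lam) : ℝ) * σ) ^ 2 - (a * b / lam : ℝ) := by
  rw [charEta, one_div, cpow_ofNat_inv_pow]
  push_cast
  field_simp
  ring

theorem re_charEta_nonneg (lam a b : ℝ) (σ : ℂ) : 0 ≤ (charEta lam a b σ).re := by
  rw [charEta, one_div, cpow_inv_two_re]
  exact Real.sqrt_nonneg _

theorem mul_cosh_eq_mul_sinh_of_Fchar_eq_zero {lam a b k L : ℝ} {σ : ℂ}
    (h : Fchar lam a b k L σ = 0) :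
    (k - 1) * charEta lam a b σ * cosh (charEta lam a b σ * L) =
      ((k + 1) * (((lam + 1) / (2 * lam) : ℝ) * σ) + (k * b / lam + a : ℝ)) *
        sinh (charEta lam a b σ * L) := by
  by_cases hη : charEta lam a b σ = 0
  · simp [hη]
  rw [Fchar, if_neg hη, sub_eq_zero] at h
  push_cast
  linear_combination charEta lam a b σ * h -
    ((k + 1) * ((lam + 1) / (2 * lam) * σ) + (k * b / lam + a)) *
      (div_mul_cancel₀ (sinh (charEta lam a b σ * L)) hη).symm

theorem stmt_8_general (lam a b δ : ℝ) (hlam : 0 < lam) (hδ0 : 0 < δ) :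
    ∃ R : ℝ, 0 < R ∧ ∀ k : ℝ, |k| ≤ 1 - δ → ∀ L : ℝ, 0 < L → ∀ σ : ℂ,
      0 ≤ σ.re → Fchar lam a b k L σ = 0 → ‖σ‖ ≤ R := by
  set B₀ := |b| / lam + |a|
  set M₀ := 2 * √|a * b / lam| + B₀ / δ + 4 * (2 * √|a * b / lam| + B₀) / δ ^ 3
  have hscale : 0 < (lam + 1) / (2 * lam) := by positivity
  refine ⟨M₀ / ((lam + 1) / (2 * lam)) + 1, by positivity, ?_⟩
  intro k hk L hL σ hσ hF
  have hB : ‖((k * b / lam + a : ℝ) : ℂ)‖ ≤ B₀ := by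
    have : |k| * |b| / lam ≤ |b| / lam := by
      gcongr; exact mul_le_of_le_one_left (abs_nonneg b) (by linarith)
    rw [norm_real, Real.norm_eq_abs]
    refine (abs_add_le _ _).trans ?_
    rw [abs_div, abs_mul, abs_of_pos hlam]
    linarith
  have hμ := norm_le_of_mul_cosh_eq_mul_sinh hδ0 hk hL (charEta_sq lam a b σ)
    (re_charEta_nonneg lam a b σ) (by rw [re_ofReal_mul]; positivity) hB
    (mul_cosh_eq_mul_sinh_of_Fchar_eq_zero hF)
  rw [norm_mul, norm_real, Real.norm_of_nonneg hscale.le] at hμ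
  linarith [(le_div_iff₀' hscale).2 hμ]

/-- For fixed `λ > 0`, `a`, `b` and `δ ∈ (0,1)`, the zeros of `F_{a,b,λ,k,L}`
in the closed right half-plane are bounded uniformly in `|k| ≤ 1−δ` and `L > 0`. -/
theorem stmt_8 (lam a b δ : ℝ) (hlam : 0 < lam) (hδ0 : 0 < δ) (hδ1 : δ < 1) :
    ∃ R : ℝ, 0 < R ∧ ∀ k : ℝ, |k| ≤ 1 - δ → ∀ L : ℝ, 0 < L → ∀ σ : ℂ,
      0 ≤ σ.re → Fchar lam a b k L σ = 0 → ‖σ‖ ≤ R :=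
  stmt_8_general lam a b δ hlam hδ0
end

section
/- Let λ > 0 be real, let k ∈ (−1,1) be real, let L₀ > 0 be real, and let η₀ ∈ ℂ be such that η₀² is a nonzero real number and sinh(η₀·L₀) ≠ 0. Then the complex number (−2λ(k−1)/((λ+1)(k+1))) · η₀² / sinh(η₀·L₀)² is a positive real number. -/
/-!
With `w = η₀ L₀`, `w²` is real, so `w = t` or `w = t i` with `t` real. Then `w² / sinh² w` is
`t² / sinh² t`, respectively `(t i)² / (i sin t)² = t² / sin² t`; in both cases a positive real, and
`η₀² / sinh² w` is that number divided by `L₀²`.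
-/

open Complex

lemma Complex.exists_eq_ofReal_or_eq_ofReal_mul_I_of_im_sq_eq_zero {w : ℂ} (h : (w ^ 2).im = 0) :
    ∃ t : ℝ, w = t ∨ w = t * I := by
  have hreim : w.re * w.im = 0 := by
    rw [pow_two, mul_im] at h
    linarith
  rcases mul_eq_zero.1 hreim with hre | him
  · exact ⟨w.im, Or.inr (by simpa [hre] using (re_add_im w).symm)⟩
  · exact ⟨w.re, Or.inl (by simpa [him] using (re_add_im w).symm)⟩

lemma Complex.exists_pos_sq_div_sinh_sq {w : ℂ} (hw : (w ^ 2).im = 0) (hw₀ : w ≠ 0)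
    (hs : sinh w ≠ 0) : ∃ r : ℝ, 0 < r ∧ w ^ 2 / sinh w ^ 2 = r := by
  obtain ⟨t, rfl | rfl⟩ := exists_eq_ofReal_or_eq_ofReal_mul_I_of_im_sq_eq_zero hw
  · rw [← ofReal_sinh] at hs ⊢
    have ht : t ≠ 0 := by exact_mod_cast hw₀
    have hst : Real.sinh t ≠ 0 := by exact_mod_cast hs
    exact ⟨t ^ 2 / Real.sinh t ^ 2, by positivity, by push_cast; rfl⟩
  · rw [sinh_mul_I, ← ofReal_sin] at hs ⊢
    have ht : t ≠ 0 := by rintro rfl; simp at hw₀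
    have hst : Real.sin t ≠ 0 := by rintro h; simp [h] at hs
    refine ⟨t ^ 2 / Real.sin t ^ 2, by positivity, ?_⟩
    simp only [mul_pow, I_sq, ofReal_div, ofReal_pow]
    rw [mul_neg_one, mul_neg_one, neg_div_neg_eq]

lemma neg_two_mul_mul_sub_one_div_pos {lam k : ℝ} (hlam : 0 < lam) (hk : k ∈ Set.Ioo (-1 : ℝ) 1) :
    0 < -(2 * lam * (k - 1)) / ((lam + 1) * (k + 1)) := by
  obtain ⟨hk₁, hk₂⟩ := hk
  apply div_pos <;> nlinarith

theorem stmt_10_general (lam k L₀ : ℝ) (hlam : 0 < lam) (hk : k ∈ Set.Ioo (-1 : ℝ) 1)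
    (η₀ : ℂ) (him : (η₀ ^ 2).im = 0) (hne : η₀ ^ 2 ≠ 0)
    (hs : Complex.sinh (η₀ * L₀) ≠ 0) :
    ∃ r : ℝ, 0 < r ∧
      (-(2 * (lam : ℂ) * ((k : ℂ) - 1)) / (((lam : ℂ) + 1) * ((k : ℂ) + 1))) * η₀ ^ 2 /
        Complex.sinh (η₀ * (L₀ : ℂ)) ^ 2 = (r : ℂ) := by
  have hL₀ : L₀ ≠ 0 := by rintro rfl; simp at hs
  have hw : ((η₀ * L₀) ^ 2).im = 0 := by rw [mul_pow, ← ofReal_pow, im_mul_ofReal, him, zero_mul]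
  have hw₀ : η₀ * L₀ ≠ 0 := mul_ne_zero (pow_ne_zero_iff two_ne_zero |>.1 hne) (ofReal_ne_zero.2 hL₀)
  obtain ⟨r, hr, hqr⟩ := exists_pos_sq_div_sinh_sq hw hw₀ hs
  have hq : η₀ ^ 2 / sinh (η₀ * L₀) ^ 2 = ((r / L₀ ^ 2 : ℝ) : ℂ) := by
    have : (L₀ : ℂ) ≠ 0 := ofReal_ne_zero.2 hL₀
    rw [ofReal_div, ofReal_pow, ← hqr]
    field_simp
  have hc := neg_two_mul_mul_sub_one_div_pos hlam hk
  refine ⟨_ * (r / L₀ ^ 2), mul_pos hc (by positivity), ?_⟩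
  rw [mul_div_assoc, hq]
  push_cast
  rfl

/-- For `λ > 0`, `k ∈ (−1,1)`, `L₀ > 0` and `η₀ ∈ ℂ` with `η₀²` a nonzero
real number and `sinh(η₀L₀) ≠ 0`, the quantity
`(−2λ(k−1)/((λ+1)(k+1)))·η₀²/sinh(η₀L₀)²` is a positive real number. -/
theorem stmt_10 (lam k L₀ : ℝ) (hlam : 0 < lam) (hk : k ∈ Set.Ioo (-1 : ℝ) 1) (hL : 0 < L₀)
    (η₀ : ℂ) (him : (η₀ ^ 2).im = 0) (hne : η₀ ^ 2 ≠ 0)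
    (hs : Complex.sinh (η₀ * L₀) ≠ 0) :
    ∃ r : ℝ, 0 < r ∧
      (-(2 * (lam : ℂ) * ((k : ℂ) - 1)) / (((lam : ℂ) + 1) * ((k : ℂ) + 1))) * η₀ ^ 2 /
        Complex.sinh (η₀ * (L₀ : ℂ)) ^ 2 = (r : ℂ) :=
  stmt_10_general lam k L₀ hlam hk η₀ him hne hs
end

section
/- Fix real numbers λ > 0, a, b with ab > 0, and let k ∈ (−1,1). Set ω := √(ab/λ) > 0. Then: (i) there is a unique θ₀ ∈ (0, π) such that (k−1)·ω·cos(θ₀) = (k·b/λ + a)·sin(θ₀); (ii) for L > 0, F_{a,b,λ,k,L}(0) = 0 if and only if L = (θ₀ + nπ)/ω for some nonnegative integer n; equivalently, {L > 0 : F_{a,b,λ,k,L}(0) = 0} = {(θ₀ + nπ)/ω : n ∈ ℕ}. -/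
private lemma sin_trick (A B x y : ℝ) (hA : A ≠ 0)
    (hx : A * Real.cos x = B * Real.sin x) (hy : A * Real.cos y = B * Real.sin y) :
    ∃ m : ℤ, x - y = m * Real.pi := by
  have h : A * Real.sin (x - y) = 0 := by
    rw [Real.sin_sub]
    linear_combination Real.sin x * hy - Real.sin y * hx
  have h2 : Real.sin (x - y) = 0 := by
    rcases mul_eq_zero.1 h with h' | h'
    · exact absurd h' hA
    · exact h'
  obtain ⟨m, hm⟩ := Real.sin_eq_zero_iff.1 h2
  exact ⟨m, hm.symm⟩

private lemma step_pi (A B x : ℝ) (hx : A * Real.cos x = B * Real.sin x) :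
    A * Real.cos (x + Real.pi) = B * Real.sin (x + Real.pi) := by
  rw [Real.cos_add_pi, Real.sin_add_pi]; linarith [hx]

/-- For `ab > 0`, `k ∈ (−1,1)` and `ω = √(ab/λ)`: (i) there is a unique
`θ₀ ∈ (0,π)` with `(k−1)ω·cos θ₀ = (kb/λ + a)·sin θ₀`; (ii) for `L > 0`,
`F_{a,b,λ,k,L}(0) = 0` iff `L = (θ₀ + nπ)/ω` for some `n ∈ ℕ`. -/
theorem stmt_12 (lam a b k : ℝ) (hlam : 0 < lam) (hab : 0 < a * b)
    (hk : k ∈ Set.Ioo (-1 : ℝ) 1) (ω : ℝ) (hω : ω = Real.sqrt (a * b / lam)) :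
    0 < ω ∧
    (∃! θ₀ : ℝ, θ₀ ∈ Set.Ioo 0 Real.pi ∧
      (k - 1) * ω * Real.cos θ₀ = (k * b / lam + a) * Real.sin θ₀) ∧
    (∀ θ₀ : ℝ, θ₀ ∈ Set.Ioo 0 Real.pi →
      (k - 1) * ω * Real.cos θ₀ = (k * b / lam + a) * Real.sin θ₀ →
      ∀ L : ℝ, 0 < L →
        (Fchar lam a b k L 0 = 0 ↔ ∃ n : ℕ, L = (θ₀ + n * Real.pi) / ω)) := by
  have hr : 0 < a * b / lam := div_pos hab hlam
  have hωpos : 0 < ω := hω ▸ Real.sqrt_pos.2 hr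
  have hω2 : ω ^ 2 = a * b / lam := by rw [hω]; exact Real.sq_sqrt hr.le
  set A : ℝ := (k - 1) * ω with hA
  set B : ℝ := k * b / lam + a with hB
  have hAneg : A < 0 := mul_neg_of_neg_of_pos (by linarith [hk.2]) hωpos
  have hAne : A ≠ 0 := ne_of_lt hAneg
  -- uniqueness helper
  have huniq : ∀ θ θ' : ℝ, θ ∈ Set.Ioo 0 Real.pi → θ' ∈ Set.Ioo 0 Real.pi →
      A * Real.cos θ = B * Real.sin θ → A * Real.cos θ' = B * Real.sin θ' → θ = θ' := by
    intro θ θ' hθ hθ' h1 h2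
    obtain ⟨m, hm⟩ := sin_trick A B θ θ' hAne h1 h2
    have hπ : (0:ℝ) < Real.pi := Real.pi_pos
    have hm0 : m = 0 := by
      by_contra hm0
      have h1' : (1:ℝ) ≤ |(m:ℝ)| := by
        have := Int.one_le_abs (by omega : m ≠ 0)
        exact_mod_cast this
      have : |θ - θ'| < Real.pi := by
        rw [abs_sub_lt_iff]; constructor <;> [skip; skip] <;>
          cases hθ with | intro h1 h2 => cases hθ' with | intro h3 h4 => linarith
      rw [hm, abs_mul, abs_of_pos hπ] at this
      nlinarith
    rw [hm0] at hm; push_cast at hm; linarith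
  -- existence
  have hexist : ∃ θ₀ ∈ Set.Ioo 0 Real.pi, A * Real.cos θ₀ = B * Real.sin θ₀ := by
    have hcont : ContinuousOn (fun θ => A * Real.cos θ - B * Real.sin θ)
        (Set.Icc 0 Real.pi) :=
      ((continuous_const.mul Real.continuous_cos).sub
        (continuous_const.mul Real.continuous_sin)).continuousOn
    have h0 : (fun θ => A * Real.cos θ - B * Real.sin θ) 0 = A := by simp
    have hπv : (fun θ => A * Real.cos θ - B * Real.sin θ) Real.pi = -A := by simp
    have hsub := intermediate_value_Ioo (le_of_lt Real.pi_pos) hcont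
    have : (0:ℝ) ∈ Set.Ioo ((fun θ => A * Real.cos θ - B * Real.sin θ) 0)
        ((fun θ => A * Real.cos θ - B * Real.sin θ) Real.pi) := by
      rw [h0, hπv]; exact ⟨hAneg, by linarith⟩
    obtain ⟨θ₀, hθ₀, hval⟩ := hsub this
    exact ⟨θ₀, hθ₀, by linarith [hval, sub_eq_zero.mp hval]⟩
  obtain ⟨θ₀', hθ₀'mem, hθ₀'eq⟩ := hexist
  refine ⟨hωpos, ⟨θ₀', ⟨hθ₀'mem, hθ₀'eq⟩, fun θ hθ => huniq θ θ₀' hθ.1 hθ₀'mem hθ.2 hθ₀'eq⟩, ?_⟩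
  -- part (ii)
  intro θ₀ hθ₀ hθ₀eq L hL
  -- compute charEta at 0
  set η := charEta lam a b 0 with hη
  have hlamC : (lam:ℂ) ≠ 0 := Complex.ofReal_ne_zero.2 hlam.ne'
  have hbase : (((lam : ℂ) + 1) ^ 2 * (0:ℂ) ^ 2 - 4 * (lam : ℂ) * a * b) / (4 * (lam : ℂ) ^ 2)
      = -((a*b/lam : ℝ) : ℂ) := by
    push_cast
    field_simp
    ring
  have hbasene : -((a*b/lam : ℝ) : ℂ) ≠ 0 := by
    simp only [neg_ne_zero, Complex.ofReal_ne_zero]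
    exact hr.ne'
  have hη2 : η ^ 2 = -((a*b/lam : ℝ) : ℂ) := by
    rw [hη, charEta, hbase, sq, ← Complex.cpow_add _ _ hbasene]
    norm_num
  have hηval : η = Complex.I * ω ∨ η = -(Complex.I * ω) := by
    have : (η - Complex.I * ω) * (η + Complex.I * ω) = 0 := by
      have hω2C : ((ω:ℂ))^2 = ((a*b/lam : ℝ) : ℂ) := by
        rw [← Complex.ofReal_pow, hω2]
      calc (η - Complex.I * ω) * (η + Complex.I * ω)
          = η^2 + (ω:ℂ)^2 - (Complex.I^2 + 1) * (ω:ℂ)^2 := by ring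
        _ = 0 := by rw [hη2, hω2C, Complex.I_sq]; ring
    rcases mul_eq_zero.1 this with h | h
    · exact Or.inl (by linear_combination h)
    · exact Or.inr (by linear_combination h)
  have hηne : η ≠ 0 := by
    rcases hηval with h | h <;> rw [h] <;> simp [Complex.I_ne_zero, hωpos.ne']
  -- value of Fchar at 0
  have hFval : Fchar lam a b k L 0 =
      (((k - 1) * Real.cos (ω * L) - B * (Real.sin (ω*L) / ω) : ℝ) : ℂ) := by
    rw [Fchar, if_neg hηne]
    have hcosh : Complex.cosh (η * L) = ((Real.cos (ω*L) : ℝ) : ℂ) := by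
      rcases hηval with h | h <;> rw [h]
      · rw [show Complex.I * (ω:ℂ) * L = ((ω*L : ℝ):ℂ) * Complex.I by push_cast; ring,
          Complex.cosh_mul_I, Complex.ofReal_cos]
      · rw [show -(Complex.I * (ω:ℂ)) * L = -(((ω*L : ℝ):ℂ) * Complex.I) by push_cast; ring,
          Complex.cosh_neg, Complex.cosh_mul_I, Complex.ofReal_cos]
    have hsinh : Complex.sinh (η * L) / η = ((Real.sin (ω*L) / ω : ℝ) : ℂ) := by
      have hIne : Complex.I * (ω:ℂ) ≠ 0 := by simp [Complex.I_ne_zero, hωpos.ne']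
      rcases hηval with h | h <;> rw [h]
      · rw [show Complex.I * (ω:ℂ) * L = ((ω*L : ℝ):ℂ) * Complex.I by push_cast; ring,
          Complex.sinh_mul_I, ← Complex.ofReal_sin]
        push_cast
        rw [div_eq_div_iff hIne (Complex.ofReal_ne_zero.2 hωpos.ne')]
        ring
      · rw [show -(Complex.I * (ω:ℂ)) * L = -(((ω*L : ℝ):ℂ) * Complex.I) by push_cast; ring,
          Complex.sinh_neg, Complex.sinh_mul_I, ← Complex.ofReal_sin]
        push_cast
        rw [div_eq_div_iff (neg_ne_zero.2 hIne) (Complex.ofReal_ne_zero.2 hωpos.ne')]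
        ring
    rw [hcosh, hsinh, hB]
    push_cast
    ring
  rw [hFval, Complex.ofReal_eq_zero]
  have hωne : ω ≠ 0 := hωpos.ne'
  constructor
  · intro h
    have hEq : A * Real.cos (ω * L) = B * Real.sin (ω * L) := by
      rw [hA]
      field_simp at h
      nlinarith [h]
    obtain ⟨m, hm⟩ := sin_trick A B (ω * L) θ₀ hAne hEq hθ₀eq
    have hmpos : 0 ≤ m := by
      by_contra hneg
      push_neg at hneg
      have : (m:ℝ) ≤ -1 := by exact_mod_cast (by omega : m ≤ -1)
      have hπ := Real.pi_pos
      have hωL : 0 < ω * L := mul_pos hωpos hL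
      have : ω * L = θ₀ + m * Real.pi := by linarith [hm]
      nlinarith [hθ₀.2, hθ₀.1]
    refine ⟨m.toNat, ?_⟩
    have : (m.toNat : ℝ) = (m : ℝ) := by exact_mod_cast Int.toNat_of_nonneg hmpos
    rw [eq_div_iff hωne, this]
    linarith [hm]
  · rintro ⟨n, rfl⟩
    have hωL : ω * ((θ₀ + n * Real.pi) / ω) = θ₀ + n * Real.pi := by field_simp
    have hEqAll : ∀ m : ℕ, A * Real.cos (θ₀ + m * Real.pi) = B * Real.sin (θ₀ + m * Real.pi) := by
      intro m
      induction m with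
      | zero => simpa using hθ₀eq
      | succ m ih =>
        have h' : θ₀ + (m+1 : ℕ) * Real.pi = (θ₀ + m * Real.pi) + Real.pi := by push_cast; ring
        rw [h']
        exact step_pi A B _ ih
    have hEq := hEqAll n
    rw [hωL]
    rw [hA] at hEq
    field_simp
    nlinarith [hEq]
end

section
/- Fix real numbers λ > 0 and a > 0, b > 0. For k ∈ (−1,1), let θ₀(k) be the unique θ ∈ (0, π) with (k−1)·√(ab/λ)·cos(θ) = (k·b/λ + a)·sin(θ). Then the function k ↦ θ₀(k) is strictly increasing on (−1,1), θ₀(k) < π for all k ∈ (−1,1), and sup{θ₀(k) : k ∈ (−1,1)} = π. Consequently, the supremum over k ∈ (−1,1) of the smallest positive L with F_{a,b,λ,k,L}(0) = 0 equals √(λ/(ab))·π. -/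
open Real Filter Topology Set

lemma csSup_image_eq_of_tendsto {α β : Type*} [ConditionallyCompleteLinearOrder β]
    [TopologicalSpace β] [OrderTopology β] {f : α → β} {s : Set α} {l : Filter α} [l.NeBot]
    {M : β} (hs : s ∈ l) (hle : ∀ x ∈ s, f x ≤ M) (hf : Tendsto f l (𝓝 M)) :
    sSup (f '' s) = M :=
  (isLUB_of_mem_closure (forall_mem_image.2 hle)
    (mem_closure_of_tendsto hf (eventually_of_mem hs fun _ => mem_image_of_mem f))).csSup_eq
    ((Filter.nonempty_of_mem hs).image f)

lemma strictAntiOn_mul_add_div_sub_one {p q : ℝ} (h : 0 < p + q) :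
    StrictAntiOn (fun k => (p * k + q) / (k - 1)) (Iio 1) := by
  intro j hj k hk hjk
  have hj' : 0 < 1 - j := sub_pos.2 hj
  have hk' : 0 < 1 - k := sub_pos.2 hk
  simp only [← neg_sub (1 : ℝ), div_neg, neg_lt_neg_iff]
  rw [div_lt_div_iff₀ hj' hk']
  nlinarith [mul_pos h (sub_pos.2 hjk)]

lemma tendsto_mul_add_div_sub_one_atBot {p q : ℝ} (h : 0 < p + q) :
    Tendsto (fun k => (p * k + q) / (k - 1)) (𝓝[<] 1) atBot := by
  have hnum : Tendsto (fun k => p * k + q) (𝓝[<] 1) (𝓝 (p + q)) := by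
    have : Continuous (fun k : ℝ => p * k + q) := by fun_prop
    simpa using (this.tendsto 1).mono_left nhdsWithin_le_nhds
  have hden : Tendsto (fun k : ℝ => k - 1) (𝓝[<] 1) (𝓝[<] 0) := by
    refine tendsto_nhdsWithin_of_tendsto_nhds_of_eventually_within _ ?_ ?_
    · simpa using ((continuous_sub_right (1 : ℝ)).tendsto 1).mono_left nhdsWithin_le_nhds
    · filter_upwards [self_mem_nhdsWithin] with k (hk : k < 1) using sub_neg.2 hk
  simpa only [div_eq_mul_inv, Function.comp_def] using
    hnum.pos_mul_atBot h (tendsto_inv_nhdsLT_zero.comp hden)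

lemma eq_pi_div_two_sub_arctan_of_mul_cos_eq_mul_sin {c d θ : ℝ} (hc : c ≠ 0)
    (hθ : θ ∈ Ioo 0 π) (h : c * cos θ = d * sin θ) : θ = π / 2 - arctan (d / c) := by
  have hs : sin θ ≠ 0 := (sin_pos_of_pos_of_lt_pi hθ.1 hθ.2).ne'
  have htan : tan (π / 2 - θ) = d / c := by
    rw [tan_eq_sin_div_cos, sin_pi_div_two_sub, cos_pi_div_two_sub, div_eq_div_iff hs hc]
    linear_combination h
  rw [← htan, arctan_tan (by linarith [hθ.2]) (by linarith [hθ.1])]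
  ring

lemma isLeast_pos_mul_cos_eq_mul_sin {c d θ : ℝ} (hc : c ≠ 0) (hθ : θ ∈ Ioc 0 π)
    (h : c * cos θ = d * sin θ) : IsLeast {x | 0 < x ∧ c * cos x = d * sin x} θ := by
  refine ⟨⟨hθ.1, h⟩, fun x ⟨hx, hx'⟩ => ?_⟩
  have hsin : sin (x - θ) = 0 := by
    have : c * sin (x - θ) = 0 := by
      rw [sin_sub]
      linear_combination sin x * h - sin θ * hx'
    exact (mul_eq_zero.1 this).resolve_left hc
  obtain ⟨n, hn⟩ := sin_eq_zero_iff.1 hsin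
  have hn' : (-1 : ℝ) < n := by
    by_contra! hn1
    nlinarith [pi_pos, hθ.2]
  have hn0 : (0 : ℝ) ≤ n := by
    have : (-1 : ℤ) < n := by exact_mod_cast hn'
    exact_mod_cast (show (0 : ℤ) ≤ n by omega)
  nlinarith [pi_pos]

lemma charEta_zero {lam a b : ℝ} (hlam : lam ≠ 0) (h : 0 ≤ a * b / lam) :
    charEta lam a b 0 = Complex.I * √(a * b / lam) := by
  have hz : (((lam : ℂ) + 1) ^ 2 * 0 ^ 2 - 4 * lam * a * b) / (4 * (lam : ℂ) ^ 2)
      = ((-(a * b / lam) : ℝ) : ℂ) := by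
    have : (lam : ℂ) ≠ 0 := Complex.ofReal_ne_zero.2 hlam
    push_cast
    field_simp
    ring
  rw [charEta, hz, Complex.ofReal_cpow_of_nonpos (by linarith), ← Complex.ofReal_neg, neg_neg,
    show (1 : ℂ) / 2 = ((1 / 2 : ℝ) : ℂ) by push_cast; ring, ← Complex.ofReal_cpow h,
    ← sqrt_eq_rpow, mul_comm]
  congr 1
  push_cast
  rw [show (π : ℂ) * Complex.I * (1 / 2) = π / 2 * Complex.I by ring, Complex.exp_pi_div_two_mul_I]

lemma Fchar_zero {lam a b : ℝ} (h : 0 < a * b / lam) (k L : ℝ) :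
    Fchar lam a b k L 0 = (((k - 1) * cos (√(a * b / lam) * L) -
      (k * b / lam + a) * (sin (√(a * b / lam) * L) / √(a * b / lam)) : ℝ) : ℂ) := by
  have hlam : lam ≠ 0 := by rintro rfl; simp at h
  have hω : (√(a * b / lam) : ℂ) ≠ 0 := Complex.ofReal_ne_zero.2 (sqrt_pos.2 h).ne'
  have hη : Complex.I * √(a * b / lam) ≠ 0 := mul_ne_zero Complex.I_ne_zero hω
  rw [Fchar, charEta_zero hlam h.le, if_neg hη,
    show Complex.I * √(a * b / lam) * L = ((√(a * b / lam) * L : ℝ) : ℂ) * Complex.I by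
      push_cast; ring,
    Complex.cosh_mul_I, Complex.sinh_mul_I]
  push_cast
  field_simp
  ring

lemma Fchar_zero_eq_zero_iff {lam a b : ℝ} (h : 0 < a * b / lam) (k L : ℝ) :
    Fchar lam a b k L 0 = 0 ↔ (k - 1) * √(a * b / lam) * cos (√(a * b / lam) * L) =
      (k * b / lam + a) * sin (√(a * b / lam) * L) := by
  set ω := √(a * b / lam)
  have hω : ω ≠ 0 := (sqrt_pos.2 h).ne'
  have hF : (k - 1) * cos (ω * L) - (k * b / lam + a) * (sin (ω * L) / ω) =
      ((k - 1) * ω * cos (ω * L) - (k * b / lam + a) * sin (ω * L)) / ω := by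
    field_simp
  rw [Fchar_zero h, Complex.ofReal_eq_zero, hF, div_eq_zero_iff, or_iff_left hω, sub_eq_zero]

lemma sInf_pos_zeros_Fchar_zero {lam a b k θ : ℝ} (h : 0 < a * b / lam) (hk : k ≠ 1)
    (hθ : θ ∈ Ioc 0 π) (hθk : (k - 1) * √(a * b / lam) * cos θ = (k * b / lam + a) * sin θ) :
    sInf {L | 0 < L ∧ Fchar lam a b k L 0 = 0} = θ / √(a * b / lam) := by
  have hω : 0 < √(a * b / lam) := sqrt_pos.2 h
  have hmin := isLeast_pos_mul_cos_eq_mul_sin (mul_ne_zero (sub_ne_zero.2 hk) hω.ne') hθ hθk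
  simp only [Fchar_zero_eq_zero_iff h]
  refine IsLeast.csInf_eq ⟨⟨div_pos hθ.1 hω, ?_⟩, fun L ⟨hL, hFL⟩ => ?_⟩
  · rwa [mul_div_cancel₀ _ hω.ne']
  · rw [div_le_iff₀ hω, mul_comm]
    exact hmin.2 ⟨mul_pos hω hL, hFL⟩

/-- For `λ > 0`, `a > 0`, `b > 0`, the marginal angle `θ₀(k)` (the unique
`θ ∈ (0,π)` with `(k−1)√(ab/λ)cos θ = (kb/λ+a)sin θ`) is strictly increasing in
`k ∈ (−1,1)`, bounded by `π`, with supremum `π`; consequently the supremum over `k ∈ (−1,1)`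
of the smallest positive `L` with `F_{a,b,λ,k,L}(0) = 0` equals `√(λ/(ab))·π`. -/
theorem stmt_13 (lam a b : ℝ) (hlam : 0 < lam) (ha : 0 < a) (hb : 0 < b)
    (θ₀ : ℝ → ℝ)
    (hθ : ∀ k ∈ Set.Ioo (-1 : ℝ) 1, θ₀ k ∈ Set.Ioo 0 Real.pi ∧
      (k - 1) * Real.sqrt (a * b / lam) * Real.cos (θ₀ k) =
        (k * b / lam + a) * Real.sin (θ₀ k)) :
    StrictMonoOn θ₀ (Set.Ioo (-1 : ℝ) 1) ∧
    (∀ k ∈ Set.Ioo (-1 : ℝ) 1, θ₀ k < Real.pi) ∧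
    sSup (θ₀ '' Set.Ioo (-1 : ℝ) 1) = Real.pi ∧
    sSup ((fun k => sInf {L : ℝ | 0 < L ∧ Fchar lam a b k L 0 = 0}) '' Set.Ioo (-1 : ℝ) 1) =
      Real.sqrt (lam / (a * b)) * Real.pi := by
  set ω := √(a * b / lam)
  have hab : 0 < a * b / lam := by positivity
  have hω : 0 < ω := sqrt_pos.2 hab
  have hpq : 0 < b / (lam * ω) + a / ω := by positivity
  have hθ₀ : ∀ k ∈ Ioo (-1 : ℝ) 1,
      θ₀ k = π / 2 - arctan ((b / (lam * ω) * k + a / ω) / (k - 1)) := fun k hk => by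
    rw [show (b / (lam * ω) * k + a / ω) / (k - 1) = (k * b / lam + a) / ((k - 1) * ω) by
      rw [div_mul_eq_div_div_swap (k * b / lam + a)]; ring]
    exact eq_pi_div_two_sub_arctan_of_mul_cos_eq_mul_sin
      (mul_ne_zero (by linarith [hk.2]) hω.ne') (hθ k hk).1 (hθ k hk).2
  have hmono : StrictMonoOn θ₀ (Ioo (-1) 1) := fun j hj k hk hjk => by
    have := arctan_strictMono (strictAntiOn_mul_add_div_sub_one hpq hj.2 hk.2 hjk)
    rw [hθ₀ j hj, hθ₀ k hk]
    linarith
  have hS : Ioo (-1 : ℝ) 1 ∈ 𝓝[<] 1 := Ioo_mem_nhdsLT (by norm_num)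
  have hlim : Tendsto θ₀ (𝓝[<] 1) (𝓝 π) := by
    have := ((tendsto_arctan_atBot.mono_right nhdsWithin_le_nhds).comp
      (tendsto_mul_add_div_sub_one_atBot hpq)).const_sub (π / 2)
    rw [sub_neg_eq_add, add_halves] at this
    exact this.congr' (eventually_of_mem hS fun k hk => (hθ₀ k hk).symm)
  have hlt : ∀ k ∈ Ioo (-1 : ℝ) 1, θ₀ k < π := fun k hk => (hθ k hk).1.2
  refine ⟨hmono, hlt, csSup_image_eq_of_tendsto hS (fun k hk => (hlt k hk).le) hlim, ?_⟩
  rw [image_congr fun k hk => sInf_pos_zeros_Fchar_zero hab hk.2.ne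
      (Ioo_subset_Ioc_self (hθ k hk).1) (hθ k hk).2,
    csSup_image_eq_of_tendsto hS (fun k hk => div_le_div_of_nonneg_right (hlt k hk).le hω.le)
      (hlim.div_const ω), div_eq_mul_inv, mul_comm, ← sqrt_inv, inv_div]
end

section
/- Fix real numbers λ > 0, a, b with ab < 0, and let k ∈ (−1,1). Set ω := √(−ab/λ) > 0. Then: (i) for every L > 0, F_{a,b,λ,k,L}(0) = 0 if and only if (k−1)·ω·cosh(ωL) = (k·b/λ + a)·sinh(ωL); (ii) there exists L > 0 with F_{a,b,λ,k,L}(0) = 0 if and only if (k·b/λ + a)/((k−1)·ω) > 1, and in that case such an L is unique. -/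
private lemma coshsinh_aux (d c x : ℝ) :
    d * Real.cosh x - c * Real.sinh x
      = ((d - c) * Real.exp (2 * x) + (d + c)) / (2 * Real.exp x) := by
  have h := Real.exp_ne_zero x
  rw [Real.cosh_eq, Real.sinh_eq, two_mul, Real.exp_add, Real.exp_neg]
  field_simp
  ring

/-- For `ab < 0`, `k ∈ (−1,1)` and `ω = √(−ab/λ)`: (i) for `L > 0`,
`F_{a,b,λ,k,L}(0) = 0` iff `(k−1)ω·cosh(ωL) = (kb/λ + a)·sinh(ωL)`; (ii) such an `L > 0`
exists iff `(kb/λ + a)/((k−1)ω) > 1`, and in that case it is unique. -/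
theorem stmt_15 (lam a b k : ℝ) (hlam : 0 < lam) (hab : a * b < 0)
    (hk : k ∈ Set.Ioo (-1 : ℝ) 1) (ω : ℝ) (hω : ω = Real.sqrt (-(a * b) / lam)) :
    0 < ω ∧
    (∀ L : ℝ, 0 < L → (Fchar lam a b k L 0 = 0 ↔
      (k - 1) * ω * Real.cosh (ω * L) = (k * b / lam + a) * Real.sinh (ω * L))) ∧
    ((∃ L : ℝ, 0 < L ∧ Fchar lam a b k L 0 = 0) ↔ 1 < (k * b / lam + a) / ((k - 1) * ω)) ∧
    (1 < (k * b / lam + a) / ((k - 1) * ω) →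
      ∃! L : ℝ, 0 < L ∧ Fchar lam a b k L 0 = 0) := by
  obtain ⟨hk1, hk2⟩ := hk
  have habl : 0 < -(a * b) / lam := div_pos (neg_pos.mpr hab) hlam
  have hω0 : 0 < ω := by rw [hω]; exact Real.sqrt_pos.mpr habl
  set c := k * b / lam + a with hc
  set d := (k - 1) * ω with hdd
  have hd : d < 0 := mul_neg_of_neg_of_pos (by linarith) hω0
  have hlamC : (lam : ℂ) ≠ 0 := by exact_mod_cast hlam.ne'
  -- Step 1: charEta at 0 equals ω
  have hη : charEta lam a b 0 = (ω : ℂ) := by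
    rw [charEta]
    have h1 : ((((lam : ℂ)) + 1) ^ 2 * (0 : ℂ) ^ 2 - 4 * (lam : ℂ) * a * b) / (4 * (lam : ℂ) ^ 2)
        = ((-(a * b) / lam : ℝ) : ℂ) := by
      push_cast
      field_simp
      ring
    rw [h1, show (1 : ℂ) / 2 = ((1 / 2 : ℝ) : ℂ) by norm_num,
      ← Complex.ofReal_cpow habl.le, hω, Real.sqrt_eq_rpow]
  -- Step 2: the main real reformulation for each L > 0
  have hmain : ∀ L : ℝ, 0 < L → (Fchar lam a b k L 0 = 0 ↔
      d * Real.cosh (ω * L) = c * Real.sinh (ω * L)) := by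
    intro L hL
    rw [Fchar, hη, if_neg (by exact_mod_cast hω0.ne' : (ω : ℂ) ≠ 0)]
    have hexpr : ((k : ℂ) - 1) * Complex.cosh ((ω : ℂ) * L) -
        (((k : ℂ) + 1) * (((lam : ℂ) + 1) / (2 * (lam : ℂ))) * 0 + ((k : ℂ) * b / lam + a)) *
          (Complex.sinh ((ω : ℂ) * L) / (ω : ℂ))
        = (((k - 1) * Real.cosh (ω * L) - (k * b / lam + a) * Real.sinh (ω * L) / ω : ℝ) : ℂ) := by
      push_cast
      ring
    rw [hexpr, Complex.ofReal_eq_zero, ← hc, hdd, sub_eq_zero, eq_div_iff hω0.ne']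
    constructor <;> intro h <;> linear_combination h
  -- Step 3: algebraic reformulation via exponentials
  have key : ∀ x : ℝ, (d * Real.cosh x = c * Real.sinh x ↔
      (d - c) * Real.exp (2 * x) = -(d + c)) := by
    intro x
    rw [← sub_eq_zero, coshsinh_aux, div_eq_zero_iff]
    have h1 : (2 * Real.exp x) ≠ 0 := by positivity
    constructor
    · rintro (h | h)
      · linarith
      · exact absurd h h1
    · intro h; left; linarith
  -- Step 4: the exists-unique solution when 1 < c / d
  have hsolve : 1 < c / d → ∃! L : ℝ, 0 < L ∧ d * Real.cosh (ω * L) = c * Real.sinh (ω * L) := by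
    intro h1
    have hcd : c < d := (one_lt_div_of_neg hd).mp h1
    have hdc : 0 < d - c := by linarith
    set R := (-(d + c)) / (d - c) with hR
    have hR1 : 1 < R := by rw [hR, lt_div_iff₀ hdc]; linarith
    have hR0 : 0 < R := lt_trans one_pos hR1
    refine ⟨Real.log R / (2 * ω), ⟨?_, ?_⟩, ?_⟩
    · exact div_pos (Real.log_pos hR1) (by positivity)
    · rw [key]
      have h2 : 2 * (ω * (Real.log R / (2 * ω))) = Real.log R := by
        field_simp
      rw [h2, Real.exp_log hR0, hR]
      field_simp
    · rintro L ⟨hL, hFL⟩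
      rw [key] at hFL
      have h2 : Real.exp (2 * (ω * L)) = R := by
        rw [hR, eq_div_iff hdc.ne']
        linarith
      have h3 : 2 * (ω * L) = Real.log R := by
        rw [← Real.log_exp (2 * (ω * L)), h2]
      rw [eq_div_iff (by positivity : (2 : ℝ) * ω ≠ 0)]
      linear_combination h3
  refine ⟨hω0, hmain, ?_, ?_⟩
  · constructor
    · rintro ⟨L, hL, hFL⟩
      have hFL' := (key (ω * L)).mp ((hmain L hL).mp hFL)
      have hE1 : 1 < Real.exp (2 * (ω * L)) :=
        Real.one_lt_exp_iff.mpr (by positivity)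
      have hcd : c < d := by
        by_contra hcon
        push_neg at hcon
        nlinarith [mul_nonneg (sub_nonneg.mpr hcon) (le_of_lt (sub_pos.mpr hE1))]
      exact (one_lt_div_of_neg hd).mpr hcd
    · intro h1
      obtain ⟨L, ⟨hL, hEq⟩, _⟩ := hsolve h1
      exact ⟨L, hL, (hmain L hL).mpr hEq⟩
  · intro h1
    obtain ⟨L, ⟨hL, hEq⟩, huniq⟩ := hsolve h1
    exact ⟨L, ⟨hL, (hmain L hL).mpr hEq⟩,
      fun y hy => huniq y ⟨hy.1, (hmain y hy.1).mp hy.2⟩⟩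
end

section
/- Fix real numbers λ > 0 and a < 0 < b with b + λa < 0. Set ω := √(−ab/λ). Then: (i) for every k ∈ (−1,1), (k·b/λ + a)/((k−1)·ω) > 1, and hence there is a unique L_k > 0 with (k−1)·ω·cosh(ω·L_k) = (k·b/λ + a)·sinh(ω·L_k); (ii) the function k ↦ L_k is strictly decreasing on (−1,1); (iii) sup{L_k : k ∈ (−1,1)} = t*/ω, where t* > 0 is the unique positive real with cosh(t*)·2√(−λab) = (b − λa)·sinh(t*). -/
/-!
As `cosh > 0`, the equation `d cosh x = c sinh x` says `tanh x = d / c`. For `k ∈ [-1, 1)` the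
ratio `r k = (k - 1) ω / (k b / λ + a)` lies in `(0, 1)` (by AM-GM for `ω² = (-a)(b / λ)`), so
`L_k = artanh (r k) / ω`. As a Möbius function of `k`, `r` decreases on `[-1, 1]`, hence so does
`L_k`, and its supremum is the limit of `artanh (r k) / ω` as `k → -1`, where
`r (-1) = 2 √(-λab) / (b - λa) = tanh t*`.
-/
open Real Set Filter Topology

theorem mul_cosh_eq_mul_sinh_iff_tanh_eq {c d x : ℝ} (hc : c ≠ 0) :
    d * cosh x = c * sinh x ↔ tanh x = d / c := by
  rw [tanh_eq_sinh_div_cosh, div_eq_div_iff (cosh_pos x).ne' hc]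
  constructor <;> intro h <;> linarith

theorem pos_and_mul_cosh_eq_mul_sinh_iff {c d ω L : ℝ} (hω : 0 < ω) (hdc : d / c ∈ Ioo 0 1) :
    (0 < L ∧ d * cosh (ω * L) = c * sinh (ω * L)) ↔ L = artanh (d / c) / ω := by
  have hc : c ≠ 0 := by rintro rfl; simp at hdc
  rw [mul_cosh_eq_mul_sinh_iff_tanh_eq hc, eq_div_iff hω.ne', mul_comm L]
  constructor
  · rintro ⟨-, h⟩
    rw [← h, artanh_tanh]
  · intro h
    refine ⟨pos_of_mul_pos_right (h ▸ artanh_pos hdc) hω.le, ?_⟩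
    rw [h, tanh_artanh ⟨by linarith [hdc.1], hdc.2⟩]

theorem continuousAt_artanh {x : ℝ} (hx : x ∈ Ioo (-1) 1) : ContinuousAt artanh x := by
  have h1 : 0 < 1 - x := by linarith [hx.2]
  have h2 : 0 < (1 + x) / (1 - x) := div_pos (by linarith [hx.1]) h1
  unfold artanh
  exact ((continuousAt_const.add continuousAt_id).div (continuousAt_const.sub continuousAt_id)
    h1.ne').sqrt.log (sqrt_pos.2 h2).ne'

theorem sSup_image_Ioo_eq_of_antitoneOn {f : ℝ → ℝ} {x y l : ℝ} (hxy : x < y)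
    (hf : AntitoneOn f (Ioo x y)) (hlim : Tendsto f (𝓝[>] x) (𝓝 l)) :
    sSup (f '' Ioo x y) = l :=
  (IsGLB.isLUB_of_tendsto hf (isGLB_Ioo hxy) (nonempty_Ioo.2 hxy)
    (by rwa [nhdsWithin_Ioo_eq_nhdsGT hxy])).csSup_eq ((nonempty_Ioo.2 hxy).image f)

noncomputable def criticalTanh (lam a b ω k : ℝ) : ℝ := (k - 1) * ω / (k * b / lam + a)

noncomputable def criticalLength (lam a b ω k : ℝ) : ℝ := artanh (criticalTanh lam a b ω k) / ω

section Critical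

variable {lam a b ω : ℝ}

theorem mul_div_add_neg_of_mem_Icc (hlam : 0 < lam) (hb : 0 < b) (hba : b + lam * a < 0) {k : ℝ}
    (hk : k ∈ Icc (-1) 1) : k * b / lam + a < 0 := by
  have hbk : k * b ≤ b := by nlinarith [hk.2]
  have : k * b / lam < -a := by rw [div_lt_iff₀ hlam]; linarith
  linarith

theorem criticalTanh_mem_Ioo (hlam : 0 < lam) (hb : 0 < b) (hba : b + lam * a < 0)
    (hω : 0 < ω) (hω2 : ω ^ 2 = -(a * b) / lam) {k : ℝ} (hk : k ∈ Ico (-1) 1) :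
    criticalTanh lam a b ω k ∈ Ioo 0 1 := by
  have hc := mul_div_add_neg_of_mem_Icc hlam hb hba (Ico_subset_Icc_self hk)
  have hd : (k - 1) * ω < 0 := mul_neg_of_neg_of_pos (by linarith [hk.2]) hω
  refine ⟨div_pos_of_neg_of_neg hd hc, (div_lt_one_of_neg hc).2 ?_⟩
  -- `2ω < b/λ - a` is AM-GM for `ω² = (b/λ)(-a)`, strict because `b/λ ≠ -a`.
  have hq : 0 < b / lam := div_pos hb hlam
  have hqp : b / lam < -a := by rw [div_lt_iff₀ hlam]; linarith
  have hω2' : ω ^ 2 = b / lam * -a := by rw [hω2]; ring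
  have hamgm : 2 * ω < b / lam - a := by nlinarith [sq_nonneg (b / lam + a)]
  have hkb : k * b / lam = k * (b / lam) := by ring
  nlinarith [hk.1, hk.2]

theorem criticalTanh_strictAntiOn (hlam : 0 < lam) (hb : 0 < b) (hba : b + lam * a < 0)
    (hω : 0 < ω) : StrictAntiOn (criticalTanh lam a b ω) (Icc (-1) 1) := by
  intro k₁ hk₁ k₂ hk₂ hlt
  have hc₁ := mul_div_add_neg_of_mem_Icc hlam hb hba hk₁
  have hc₂ := mul_div_add_neg_of_mem_Icc hlam hb hba hk₂
  have hqp : b / lam < -a := by rw [div_lt_iff₀ hlam]; linarith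
  rw [← sub_pos, criticalTanh, criticalTanh, div_sub_div _ _ hc₁.ne hc₂.ne]
  refine div_pos ?_ (mul_pos_of_neg_of_neg hc₁ hc₂)
  have hkb : ∀ k, k * b / lam = k * (b / lam) := fun k => by ring
  rw [hkb, hkb]
  nlinarith [mul_pos (mul_pos hω (sub_pos.2 hlt)) (sub_pos.2 hqp)]

theorem criticalTanh_neg_one (hlam : 0 < lam) (hω : 0 < ω) (hω2 : ω ^ 2 = -(a * b) / lam) :
    criticalTanh lam a b ω (-1) = 2 * √(-(lam * a * b)) / (b - lam * a) := by
  have hsqrt : √(-(lam * a * b)) = lam * ω := by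
    rw [← sqrt_sq (mul_pos hlam hω).le, mul_pow, hω2]
    congr 1
    field_simp
  have hden : (-1) * b / lam + a = -(b - lam * a) / lam := by field_simp; ring
  rw [criticalTanh, hsqrt, hden, div_div_eq_mul_div, div_neg, ← neg_div]
  ring

theorem two_sqrt_div_mem_Ioo (hb : 0 < b) (hba : b + lam * a < 0) :
    2 * √(-(lam * a * b)) / (b - lam * a) ∈ Ioo 0 1 := by
  have hpos : 0 < -(lam * a * b) := by nlinarith
  have hs := sq_sqrt hpos.le
  have hden : 0 < b - lam * a := by linarith
  refine ⟨div_pos (by positivity) hden, (div_lt_one hden).2 ?_⟩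
  -- `(b - λa)² - 4(-λab) = (b + λa)² > 0`
  nlinarith [sqrt_nonneg (-(lam * a * b))]

theorem criticalLength_strictAntiOn (hlam : 0 < lam) (hb : 0 < b) (hba : b + lam * a < 0)
    (hω : 0 < ω) (hω2 : ω ^ 2 = -(a * b) / lam) :
    StrictAntiOn (criticalLength lam a b ω) (Ioo (-1) 1) := fun k₁ hk₁ k₂ hk₂ h =>
  div_lt_div_of_pos_right ((strictMonoOn_artanh.comp_strictAntiOn
    ((criticalTanh_strictAntiOn hlam hb hba hω).mono Ioo_subset_Icc_self)
    (fun k hk => Ioo_subset_Ioo_left (by norm_num)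
      (criticalTanh_mem_Ioo hlam hb hba hω hω2 (Ioo_subset_Ico_self hk)))) hk₁ hk₂ h) hω

theorem continuousAt_criticalLength_neg_one (hlam : 0 < lam) (hb : 0 < b)
    (hba : b + lam * a < 0) (hω : 0 < ω) (hω2 : ω ^ 2 = -(a * b) / lam) :
    ContinuousAt (criticalLength lam a b ω) (-1) := by
  have hden : (-1) * b / lam + a ≠ 0 := (mul_div_add_neg_of_mem_Icc hlam hb hba (by norm_num)).ne
  have hr : ContinuousAt (criticalTanh lam a b ω) (-1) := by
    unfold criticalTanh
    fun_prop (disch := exact hden)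
  have hmem := criticalTanh_mem_Ioo hlam hb hba hω hω2 (k := -1) (by norm_num)
  exact ((continuousAt_artanh (Ioo_subset_Ioo_left (by norm_num) hmem)).comp hr).div_const ω

end Critical

theorem stmt_16_general (lam a b : ℝ) (hlam : 0 < lam) (hb : 0 < b)
    (hba : b + lam * a < 0) (ω : ℝ) (hω : ω = Real.sqrt (-(a * b) / lam))
    (Lk : ℝ → ℝ)
    (hLk : ∀ k ∈ Set.Ioo (-1 : ℝ) 1, 0 < Lk k ∧
      (k - 1) * ω * Real.cosh (ω * Lk k) = (k * b / lam + a) * Real.sinh (ω * Lk k)) :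
    (∀ k ∈ Set.Ioo (-1 : ℝ) 1, 1 < (k * b / lam + a) / ((k - 1) * ω)) ∧
    (∀ k ∈ Set.Ioo (-1 : ℝ) 1, ∃! L : ℝ, 0 < L ∧
      (k - 1) * ω * Real.cosh (ω * L) = (k * b / lam + a) * Real.sinh (ω * L)) ∧
    StrictAntiOn Lk (Set.Ioo (-1 : ℝ) 1) ∧
    (∃! t : ℝ, 0 < t ∧
      Real.cosh t * (2 * Real.sqrt (-(lam * a * b))) = (b - lam * a) * Real.sinh t) ∧
    (∀ t : ℝ, 0 < t →
      Real.cosh t * (2 * Real.sqrt (-(lam * a * b))) = (b - lam * a) * Real.sinh t →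
      sSup (Lk '' Set.Ioo (-1 : ℝ) 1) = t / ω) := by
  have hab : 0 < -(a * b) / lam := div_pos (by nlinarith) hlam
  have hω0 : 0 < ω := hω ▸ sqrt_pos.2 hab
  have hω2 : ω ^ 2 = -(a * b) / lam := hω ▸ sq_sqrt hab.le
  have hr : ∀ k ∈ Ioo (-1 : ℝ) 1, criticalTanh lam a b ω k ∈ Ioo 0 1 :=
    fun k hk => criticalTanh_mem_Ioo hlam hb hba hω0 hω2 (Ioo_subset_Ico_self hk)
  have hsol : ∀ k ∈ Ioo (-1 : ℝ) 1, ∀ L, (0 < L ∧ (k - 1) * ω * cosh (ω * L) =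
      (k * b / lam + a) * sinh (ω * L)) ↔ L = criticalLength lam a b ω k :=
    fun k hk L => pos_and_mul_cosh_eq_mul_sinh_iff hω0 (hr k hk)
  have hLk_eq : EqOn Lk (criticalLength lam a b ω) (Ioo (-1) 1) :=
    fun k hk => (hsol k hk _).1 (hLk k hk)
  have htstar : ∀ t, (0 < t ∧ cosh t * (2 * √(-(lam * a * b))) = (b - lam * a) * sinh t) ↔
      t = artanh (2 * √(-(lam * a * b)) / (b - lam * a)) := fun t => by
    simpa only [one_mul, div_one, mul_comm (cosh t)] using
      pos_and_mul_cosh_eq_mul_sinh_iff (L := t) one_pos (two_sqrt_div_mem_Ioo hb hba)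
  have hanti : StrictAntiOn Lk (Ioo (-1) 1) :=
    (criticalLength_strictAntiOn hlam hb hba hω0 hω2).congr hLk_eq.symm
  refine ⟨fun k hk => ?_, fun k hk => ⟨_, (hsol k hk _).2 rfl, fun L hL => (hsol k hk L).1 hL⟩,
    hanti, ⟨_, (htstar _).2 rfl, fun t ht => (htstar t).1 ht⟩, fun t ht hteq => ?_⟩
  · rw [← inv_div]
    exact (one_lt_inv₀ (hr k hk).1).2 (hr k hk).2
  · rw [(htstar t).1 ⟨ht, hteq⟩, ← criticalTanh_neg_one hlam hω0 hω2]
    exact sSup_image_Ioo_eq_of_antitoneOn (by norm_num) hanti.antitoneOn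
      (((continuousAt_criticalLength_neg_one hlam hb hba hω0 hω2).tendsto.mono_left
        nhdsWithin_le_nhds).congr' (eventuallyEq_of_mem (Ioo_mem_nhdsGT (by norm_num))
          hLk_eq.symm))

/-- For `λ > 0`, `a < 0 < b` with `b + λa < 0` and `ω = √(−ab/λ)`:
(i) for every `k ∈ (−1,1)`, `(kb/λ + a)/((k−1)ω) > 1` and there is a unique `L_k > 0` with
`(k−1)ω·cosh(ωL_k) = (kb/λ + a)·sinh(ωL_k)`; (ii) `k ↦ L_k` is strictly decreasing on
`(−1,1)`; (iii) `sup{L_k} = t*/ω`, where `t* > 0` is the unique positive real with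
`cosh(t*)·2√(−λab) = (b − λa)·sinh(t*)`. -/
theorem stmt_16 (lam a b : ℝ) (hlam : 0 < lam) (ha : a < 0) (hb : 0 < b)
    (hba : b + lam * a < 0) (ω : ℝ) (hω : ω = Real.sqrt (-(a * b) / lam))
    (Lk : ℝ → ℝ)
    (hLk : ∀ k ∈ Set.Ioo (-1 : ℝ) 1, 0 < Lk k ∧
      (k - 1) * ω * Real.cosh (ω * Lk k) = (k * b / lam + a) * Real.sinh (ω * Lk k)) :
    (∀ k ∈ Set.Ioo (-1 : ℝ) 1, 1 < (k * b / lam + a) / ((k - 1) * ω)) ∧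
    (∀ k ∈ Set.Ioo (-1 : ℝ) 1, ∃! L : ℝ, 0 < L ∧
      (k - 1) * ω * Real.cosh (ω * L) = (k * b / lam + a) * Real.sinh (ω * L)) ∧
    StrictAntiOn Lk (Set.Ioo (-1 : ℝ) 1) ∧
    (∃! t : ℝ, 0 < t ∧
      Real.cosh t * (2 * Real.sqrt (-(lam * a * b))) = (b - lam * a) * Real.sinh t) ∧
    (∀ t : ℝ, 0 < t →
      Real.cosh t * (2 * Real.sqrt (-(lam * a * b))) = (b - lam * a) * Real.sinh t →
      sSup (Lk '' Set.Ioo (-1 : ℝ) 1) = t / ω) :=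
  stmt_16_general lam a b hlam hb hba ω hω Lk hLk
end
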